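/- arXiv:1406.2707 — 9 statements merged into one kernel-verified Lean document; each statement's English description precedes it below -/
import Mathlib

section
/- Let E be a finite set, Q an E×E matrix, and P a probability measure on 2^E satisfying P[A ⊆ 𝔄] = det(Q↾A) for all A ⊆ E. Then for any diagonal matrix X with diagonal entries x_e and any A ⊆ E: E[∏_{e∈A} (1_{e∈𝔄} + x_e)] = det((Q+X)↾A). -/
/-!
Expanding the product, `E[∏_{e∈A} (1_{e∈𝔄} + x_e)] = ∑_{T⊆A} P[T ⊆ 𝔄] ∏_{e∈A∖T} x_e`,
which by hypothesis is `∑_{T⊆A} det(Q↾T) ∏_{e∈A∖T} x_e`. Expanding `det(Q↾A + X↾A)` by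
multilinearity in the rows gives the same sum of principal minors of `Q`.
-/

open Matrix Finset

section

variable {R : Type*} [CommRing R]

theorem Matrix.det_submatrix_eq_of_range_eq {E ι κ : Type*} [Fintype ι] [Fintype κ]
    [DecidableEq ι] [DecidableEq κ] (M : Matrix E E R) {f : ι → E} {g : κ → E}
    (hf : Function.Injective f) (hg : Function.Injective g) (h : Set.range f = Set.range g) :
    (M.submatrix f f).det = (M.submatrix g g).det := by
  let e : ι ≃ κ :=
    (Equiv.ofInjective f hf).trans ((Equiv.setCongr h).trans (Equiv.ofInjective g hg).symm)
  have hge : g ∘ e = f := by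
    funext i
    simpa [e] using Equiv.apply_ofInjective_symm hg ⟨f i, h ▸ Set.mem_range_self i⟩
  rw [← hge, ← submatrix_submatrix, det_submatrix_equiv_self]

theorem Matrix.det_piecewise_one {n : Type*} [Fintype n] [DecidableEq n] (M : Matrix n n R)
    (S : Finset n) :
    det (S.piecewise M (1 : Matrix n n R)) = (M.submatrix ((↑) : S → n) ((↑) : S → n)).det := by
  let σ : S ⊕ {i // i ∉ S} ≃ n := Equiv.sumCompl _
  have hblocks : submatrix (S.piecewise M (1 : Matrix n n R)) σ σ =
      fromBlocks (M.submatrix ((↑) : S → n) (↑))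
        (M.submatrix ((↑) : S → n) ((↑) : {i // i ∉ S} → n)) 0 1 := by
    ext (i | i) (j | j)
    · simp [σ, Matrix.submatrix, Finset.piecewise]
    · simp [σ, Matrix.submatrix, Finset.piecewise]
    · have hij : (i : n) ≠ j := fun h => i.2 (h ▸ j.2)
      simp [σ, Matrix.submatrix, Finset.piecewise, i.2, one_apply, hij]
    · simp [σ, Matrix.submatrix, Finset.piecewise, i.2, one_apply, Subtype.ext_iff]
      -- the two sides differ only in their `Decidable` instances
      congr
  refine (det_submatrix_equiv_self σ _).symm.trans ?_
  rw [hblocks, det_fromBlocks_zero₂₁, det_one, mul_one]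

theorem Matrix.det_add_diagonal {n : Type*} [Fintype n] [DecidableEq n] (M : Matrix n n R)
    (d : n → R) :
    (M + diagonal d).det =
      ∑ S : Finset n, (∏ i ∈ Sᶜ, d i) * (M.submatrix ((↑) : S → n) ((↑) : S → n)).det := by
  rw [show (M + diagonal d).det = ∑ S : Finset n, det (S.piecewise M (diagonal d)) from
    (detRowAlternating : (n → R) [⋀^n]→ₗ[R] R).map_add_univ M (diagonal d)]
  refine Finset.sum_congr rfl fun S _ => ?_
  have hscale : S.piecewise M (diagonal d) =
      Sᶜ.piecewise (fun i => d i • S.piecewise M (1 : Matrix n n R) i)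
        (S.piecewise M (1 : Matrix n n R)) := by
    funext i j
    by_cases hi : i ∈ S
    · simp [Finset.piecewise, hi]
    · rcases eq_or_ne i j with rfl | hij
      · simp [Finset.piecewise, hi, diagonal]
      · simp [Finset.piecewise, hi, diagonal, hij]
  rw [hscale, ← det_piecewise_one M S]
  exact (detRowAlternating : (n → R) [⋀^n]→ₗ[R] R).map_piecewise_smul d _ Sᶜ

theorem Matrix.det_submatrix_add_diagonal {E : Type*} [DecidableEq E] (M : Matrix E E R)
    (d : E → R) (A : Finset E) :
    ((M + diagonal d).submatrix ((↑) : A → E) ((↑) : A → E)).det =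
      ∑ T ∈ A.powerset, (M.submatrix ((↑) : T → E) ((↑) : T → E)).det * ∏ e ∈ A \ T, d e := by
  let ι : A ↪ E := Function.Embedding.subtype (· ∈ A)
  have hsub : (M + diagonal d).submatrix ((↑) : A → E) (↑) =
      M.submatrix (↑) (↑) + diagonal (d ∘ (↑)) := by
    rw [← submatrix_diagonal _ _ Subtype.val_injective]
    rfl
  rw [hsub, det_add_diagonal]
  refine Finset.sum_nbij (fun S => S.map ι) (fun S _ => ?_)
    (fun S _ S' _ h => Finset.map_injective ι h)
    (fun T hT => ⟨T.subtype (· ∈ A), mem_coe.2 (mem_univ _), ?_⟩) (fun S _ => ?_)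
  · exact mem_powerset.2 fun e he => by obtain ⟨a, -, rfl⟩ := mem_map.1 he; exact a.2
  · exact (subtype_map _).trans (filter_true_of_mem (mem_powerset.1 hT))
  · have hcompl : Sᶜ.map ι = A \ S.map ι := by
      rw [compl_eq_univ_sdiff, Finset.map_sdiff, univ_eq_attach, attach_map_val]
    rw [mul_comm, ← hcompl, prod_map, submatrix_submatrix]
    congr 1
    refine det_submatrix_eq_of_range_eq M (Subtype.val_injective.comp Subtype.val_injective)
      Subtype.val_injective ?_
    ext e
    simp [ι]

theorem Finset.prod_indicator_add {E : Type*} [DecidableEq E] (A B : Finset E) (x : E → R) :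
    ∏ e ∈ A, ((if e ∈ B then (1 : R) else 0) + x e) =
      ∑ T ∈ A.powerset, (if T ⊆ B then (1 : R) else 0) * ∏ e ∈ A \ T, x e := by
  rw [prod_add]
  refine sum_congr rfl fun T _ => congrArg (· * _) ?_
  by_cases hT : T ⊆ B
  · rw [if_pos hT]
    exact prod_eq_one fun e he => if_pos (hT he)
  · obtain ⟨e, he, heB⟩ := not_subset.1 hT
    rw [if_neg hT]
    exact prod_eq_zero he (if_neg heB)

theorem Finset.sum_mul_prod_indicator_add {E : Type*} [Fintype E] [DecidableEq E]
    (p : Finset E → R) (x : E → R) (A : Finset E) :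
    ∑ B : Finset E, p B * ∏ e ∈ A, ((if e ∈ B then (1 : R) else 0) + x e) =
      ∑ T ∈ A.powerset, (∑ B ∈ univ.filter (fun B => T ⊆ B), p B) * ∏ e ∈ A \ T, x e := by
  simp_rw [prod_indicator_add, mul_sum]
  rw [sum_comm]
  refine sum_congr rfl fun T _ => ?_
  rw [sum_filter, sum_mul]
  exact sum_congr rfl fun B _ => by split_ifs <;> simp

end

theorem stmt4_general {E : Type*} [Fintype E] [DecidableEq E] (Q : Matrix E E ℝ)
    (p : Finset E → ℝ)
    (hd : ∀ A : Finset E, ∑ B ∈ Finset.univ.filter (fun B => A ⊆ B), p B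
      = (Q.submatrix (fun a : A => (a : E)) (fun a : A => (a : E))).det)
    (x : E → ℝ) (A : Finset E) :
    ∑ B : Finset E, p B * ∏ e ∈ A, ((if e ∈ B then (1:ℝ) else 0) + x e)
      = ((Q + Matrix.diagonal x).submatrix (fun a : A => (a : E)) (fun a : A => (a : E))).det := by
  rw [sum_mul_prod_indicator_add, det_submatrix_add_diagonal]
  exact sum_congr rfl fun T _ => by rw [hd T]

/-- If `P[A ⊆ 𝔄] = det(Q↾A)` for all `A ⊆ E`, then for any diagonal matrix `X = diag(x_e)`
and any `A ⊆ E`, `E[∏_{e∈A} (1_{e∈𝔄} + x_e)] = det((Q+X)↾A)`. -/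
theorem stmt4 {E : Type*} [Fintype E] [DecidableEq E] (Q : Matrix E E ℝ)
    (p : Finset E → ℝ)
    (h0 : ∀ B, 0 ≤ p B) (h1 : ∑ B : Finset E, p B = 1)
    (hd : ∀ A : Finset E, ∑ B ∈ Finset.univ.filter (fun B => A ⊆ B), p B
      = (Q.submatrix (fun a : A => (a : E)) (fun a : A => (a : E))).det)
    (x : E → ℝ) (A : Finset E) :
    ∑ B : Finset E, p B * ∏ e ∈ A, ((if e ∈ B then (1:ℝ) else 0) + x e)
      = ((Q + Matrix.diagonal x).submatrix (fun a : A => (a : E)) (fun a : A => (a : E))).det :=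
  stmt4_general Q p hd x A
end

section
/- Let E be a finite set, Q an E×E matrix, and P a determinantal probability measure with kernel Q (i.e., P[A ⊆ 𝔄] = det(Q↾A) for all A). Then for disjoint A₁, A₂ ⊆ E: P[A₁ ⊆ 𝔄 and A₂ ∩ 𝔄 = ∅] = det of the (A₁∪A₂)×(A₁∪A₂) matrix whose rows indexed by A₁ come from Q and whose rows indexed by A₂ come from I − Q. -/
/-!
Each row `eᵢ - Qᵢ` with `i ∈ A₂` splits multilinearly, and choosing `eᵢ` deletes row and
column `i`. Hence the determinant is `∑_{S ⊆ A₂} (-1)^|S| det(Q↾(A₁ ∪ S))`, i.e.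
`∑_{S ⊆ A₂} (-1)^|S| P[A₁ ∪ S ⊆ 𝔄]`, which is `P[A₁ ⊆ 𝔄, A₂ ∩ 𝔄 = ∅]` by inclusion–exclusion.
-/

open Finset

theorem Finset.sum_powerset_map {α β M : Type*} [DecidableEq β] [AddCommMonoid M] (f : α ↪ β)
    (s : Finset α) (g : Finset β → M) :
    ∑ t ∈ (s.map f).powerset, g t = ∑ t ∈ s.powerset, g (t.map f) := by
  simp_rw [map_eq_image, powerset_image]
  exact sum_image (image_injOn_powerset_of_injOn f.injective.injOn)

section InclusionExclusion

variable {E R : Type*} [DecidableEq E] [CommRing R]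

theorem sum_powerset_filter_union_subset_neg_one_pow (A₁ A₂ B : Finset E) :
    ∑ S ∈ A₂.powerset with A₁ ∪ S ⊆ B, (-1 : R) ^ #S =
      if A₁ ⊆ B ∧ Disjoint A₂ B then 1 else 0 := by
  by_cases hA₁ : A₁ ⊆ B
  · have hfilter : {S ∈ A₂.powerset | A₁ ∪ S ⊆ B} = (A₂ ∩ B).powerset := by
      ext S
      simp only [mem_filter, mem_powerset, union_subset_iff, subset_inter_iff, and_iff_right hA₁]
    have hsum := congrArg (Int.cast : ℤ → R) (sum_powerset_neg_one_pow_card (x := A₂ ∩ B))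
    push_cast at hsum
    rw [hfilter, hsum]
    simp [hA₁, disjoint_iff_inter_eq_empty]
  · have hfilter : {S ∈ A₂.powerset | A₁ ∪ S ⊆ B} = ∅ :=
      filter_false_of_mem fun S _ h => hA₁ (union_subset_iff.1 h).1
    simp [hfilter, hA₁]

theorem sum_subset_disjoint_eq_sum_powerset [Fintype E] (p : Finset E → R) (A₁ A₂ : Finset E) :
    ∑ B ∈ univ.filter (fun B => A₁ ⊆ B ∧ Disjoint A₂ B), p B =
      ∑ S ∈ A₂.powerset, (-1) ^ #S * ∑ B ∈ univ.filter (fun B => A₁ ∪ S ⊆ B), p B := by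
  calc ∑ B ∈ univ.filter (fun B => A₁ ⊆ B ∧ Disjoint A₂ B), p B
      = ∑ B, (∑ S ∈ A₂.powerset with A₁ ∪ S ⊆ B, (-1 : R) ^ #S) * p B := by
        rw [sum_filter]
        refine sum_congr rfl fun B _ => ?_
        rw [sum_powerset_filter_union_subset_neg_one_pow, ite_mul, one_mul, zero_mul]
    _ = _ := by
        simp only [mul_sum, sum_filter, sum_mul]
        rw [sum_comm]
        simp [ite_mul, mul_ite]

end InclusionExclusion

namespace Matrix

variable {ι R : Type*} [DecidableEq ι] [CommRing R]

theorem det_piecewise_sub_one_eq_sum_powerset [Fintype ι] (M : Matrix ι ι R) (A : Finset ι) :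
    det (of (A.piecewise M.row (1 - M).row)) =
      ∑ S ∈ Aᶜ.powerset, (-1) ^ #S * (M.submatrix ((↑) : ↥(A ∪ S) → ι) (↑)).det := by
  let D := (detRowAlternating : (ι → R) [⋀^ι]→ₗ[R] R).toMultilinearMap
  have hsplit : A.piecewise M.row (1 - M).row =
      Aᶜ.piecewise ((-M).row + A.piecewise M.row (1 : Matrix ι ι R).row)
        (A.piecewise M.row (1 : Matrix ι ι R).row) := by
    ext i : 1
    by_cases hi : i ∈ A
    · rw [piecewise_eq_of_mem _ _ _ hi, piecewise_eq_of_notMem _ _ _ (notMem_compl.2 hi),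
        piecewise_eq_of_mem _ _ _ hi]
    · rw [piecewise_eq_of_notMem _ _ _ hi, piecewise_eq_of_mem _ _ _ (mem_compl.2 hi),
        Pi.add_apply, piecewise_eq_of_notMem _ _ _ hi]
      ext j
      simp [row, sub_eq_neg_add]
  change D (A.piecewise M.row (1 - M).row) = _
  rw [hsplit, D.map_piecewise_add]
  refine sum_congr rfl fun S _ => ?_
  have hsign : S.piecewise (-M).row (A.piecewise M.row (1 : Matrix ι ι R).row) =
      S.piecewise (fun i => (-1 : R) • (A ∪ S).piecewise M.row (1 : Matrix ι ι R).row i)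
        ((A ∪ S).piecewise M.row (1 : Matrix ι ι R).row) := by
    ext i j
    by_cases hi : i ∈ S <;> simp [piecewise, hi, row]
  rw [hsign, D.map_piecewise_smul, prod_const, smul_eq_mul]
  exact congrArg _ (det_piecewise_one_eq_submatrix_det M (A ∪ S))

theorem det_submatrix_embedding_submatrix {E : Type*} [DecidableEq E] (Q : Matrix E E R)
    (f : ι ↪ E) (s : Finset ι) :
    ((Q.submatrix f f).submatrix ((↑) : s → ι) (↑)).det =
      (Q.submatrix ((↑) : ↥(s.map f) → E) (↑)).det := by
  rw [← det_submatrix_equiv_self (equivMap f s)]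
  rfl

theorem det_ite_mem_one_sub_eq_sum_powerset {E : Type*} [DecidableEq E] (Q : Matrix E E R)
    {A₁ A₂ : Finset E} (h : Disjoint A₁ A₂) :
    (of fun i j : ↥(A₁ ∪ A₂) => if (i : E) ∈ A₁ then Q i j else (1 - Q) i j).det =
      ∑ S ∈ A₂.powerset, (-1) ^ #S * (Q.submatrix ((↑) : ↥(A₁ ∪ S) → E) (↑)).det := by
  set U := A₁ ∪ A₂
  set e := Function.Embedding.subtype (· ∈ U)
  set A : Finset U := univ.filter (fun i => (i : E) ∈ A₁)
  have hrows : (of fun i j : U => if (i : E) ∈ A₁ then Q i j else (1 - Q) i j) =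
      of (A.piecewise (Q.submatrix e e).row (1 - Q.submatrix e e).row) := by
    ext i j
    by_cases hi : (i : E) ∈ A₁ <;> simp [A, e, piecewise, hi, row, one_apply]
  have hA : A.map e = A₁ := by
    ext x
    simp +contextual [A, e, U]
  have hAc : Aᶜ.map e = A₂ := by
    rw [compl_eq_univ_sdiff, Finset.map_sdiff, hA, univ_eq_attach, attach_map_val,
      union_sdiff_cancel_left h]
  rw [hrows, det_piecewise_sub_one_eq_sum_powerset, ← hAc, sum_powerset_map]
  refine sum_congr rfl fun S _ => ?_
  rw [card_map, ← hA, ← map_union, ← det_submatrix_embedding_submatrix]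

end Matrix

theorem stmt5_general {E : Type*} [Fintype E] [DecidableEq E] (Q : Matrix E E ℝ)
    (p : Finset E → ℝ)
    (hd : ∀ A : Finset E, ∑ B ∈ Finset.univ.filter (fun B => A ⊆ B), p B
      = (Q.submatrix (fun a : A => (a : E)) (fun a : A => (a : E))).det)
    (A₁ A₂ : Finset E) (hdisj : Disjoint A₁ A₂) :
    ∑ B ∈ Finset.univ.filter (fun B => A₁ ⊆ B ∧ Disjoint A₂ B), p B
      = (Matrix.of fun i j : ↑(A₁ ∪ A₂) =>
          if (i : E) ∈ A₁ then Q (i : E) (j : E)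
          else (if (i : E) = (j : E) then (1:ℝ) else 0) - Q (i : E) (j : E)).det := by
  have hrows : (Matrix.of fun i j : ↑(A₁ ∪ A₂) =>
      if (i : E) ∈ A₁ then Q (i : E) (j : E)
      else (if (i : E) = (j : E) then (1:ℝ) else 0) - Q (i : E) (j : E)) =
      Matrix.of fun i j : ↑(A₁ ∪ A₂) => if (i : E) ∈ A₁ then Q i j else (1 - Q) i j := by
    simp [Matrix.one_apply]
  rw [hrows, Matrix.det_ite_mem_one_sub_eq_sum_powerset Q hdisj,
    sum_subset_disjoint_eq_sum_powerset]
  simp_rw [hd]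

/-- For a determinantal probability measure with kernel `Q` and disjoint `A₁, A₂ ⊆ E`,
`P[A₁ ⊆ 𝔄, A₂ ∩ 𝔄 = ∅]` equals the determinant of the `(A₁∪A₂)×(A₁∪A₂)` matrix whose
rows indexed by `A₁` come from `Q` and whose rows indexed by `A₂` come from `I − Q`. -/
theorem stmt5 {E : Type*} [Fintype E] [DecidableEq E] (Q : Matrix E E ℝ)
    (p : Finset E → ℝ)
    (h0 : ∀ B, 0 ≤ p B) (h1 : ∑ B : Finset E, p B = 1)
    (hd : ∀ A : Finset E, ∑ B ∈ Finset.univ.filter (fun B => A ⊆ B), p B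
      = (Q.submatrix (fun a : A => (a : E)) (fun a : A => (a : E))).det)
    (A₁ A₂ : Finset E) (hdisj : Disjoint A₁ A₂) :
    ∑ B ∈ Finset.univ.filter (fun B => A₁ ⊆ B ∧ Disjoint A₂ B), p B
      = (Matrix.of fun i j : ↑(A₁ ∪ A₂) =>
          if (i : E) ∈ A₁ then Q (i : E) (j : E)
          else (if (i : E) = (j : E) then (1:ℝ) else 0) - Q (i : E) (j : E)).det :=
  stmt5_general Q p hd A₁ A₂ hdisj
end

section
/- (Cauchy–Binet) For k×n matrices a and b over a commutative ring, det(a·bᵀ) = Σ_{J ⊆ {1,…,n}, |J|=k} det(a^J)·det(b^J), where a^J denotes the k×k submatrix of a with columns indexed by J. -/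
open Finset Matrix Equiv

section aux
variable {R : Type*} [CommRing R] {k n : ℕ}

/-- Step 1: expand the determinant of the product as a sum over all column choices. -/
private lemma cb_step1 (a b : Matrix (Fin k) (Fin n) R) :
    (a * b.transpose).det
      = ∑ p : Fin k → Fin n, (∏ i, b i (p i)) * (a.submatrix id p).det := by
  simp only [det_apply', mul_apply, transpose_apply, Finset.prod_univ_sum, Finset.mul_sum,
    Fintype.piFinset_univ, submatrix_apply, id_eq]
  rw [Finset.sum_comm]
  refine Fintype.sum_congr _ _ fun p => ?_
  refine Fintype.sum_congr _ _ fun σ => ?_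
  rw [Finset.prod_mul_distrib]
  ring

private lemma cb_vanish (a : Matrix (Fin k) (Fin n) R) {p : Fin k → Fin n}
    (hp : ¬ Function.Injective p) : (a.submatrix id p).det = 0 := by
  rw [Function.Injective] at hp
  push_neg at hp
  obtain ⟨i, j, hij, hne⟩ := hp
  exact det_zero_of_column_eq hne (fun x => by simp [hij])

/-- Reindexing injective functions `Fin k → Fin n` by pairs (k-subset, permutation). -/
private lemma cb_reindex {M : Type*} [AddCommMonoid M] (F : (Fin k → Fin n) → M) :
    ∑ p ∈ Finset.univ.filter (fun p : Fin k → Fin n => Function.Injective p), F p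
      = ∑ J ∈ (Finset.univ.powersetCard k : Finset (Finset (Fin n))).attach,
          ∑ σ : Perm (Fin k),
            F (fun i => J.1.orderEmbOfFin (Finset.mem_powersetCard.mp J.2).2 (σ i)) := by
  classical
  rw [Finset.sum_sigma']
  refine (Finset.sum_bij
    (fun x _ => fun i => x.1.1.orderEmbOfFin (Finset.mem_powersetCard.mp x.1.2).2 (x.2 i))
    ?_ ?_ ?_ ?_).symm
  · intro x _
    refine Finset.mem_filter.mpr ⟨Finset.mem_univ _, ?_⟩
    exact (x.1.1.orderEmbOfFin (Finset.mem_powersetCard.mp x.1.2).2).injective.comp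
      x.2.injective
  · rintro ⟨⟨J, hJ⟩, σ⟩ _ ⟨⟨J', hJ'⟩, σ'⟩ _ h
    dsimp only at h
    have himg : ∀ (J : Finset (Fin n)) (hJ : J ∈ Finset.univ.powersetCard k) (σ : Perm (Fin k)),
        Set.range (fun i => J.orderEmbOfFin (Finset.mem_powersetCard.mp hJ).2 (σ i)) = (J : Set (Fin n)) := by
      intro J hJ σ
      rw [show (fun i => J.orderEmbOfFin (Finset.mem_powersetCard.mp hJ).2 (σ i))
          = (J.orderEmbOfFin (Finset.mem_powersetCard.mp hJ).2) ∘ σ from rfl,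
        Set.range_comp, σ.range_eq_univ, Set.image_univ, Finset.range_orderEmbOfFin]
    have hJeq : J = J' := by
      have h1 := himg J hJ σ
      rw [h] at h1
      exact Finset.coe_injective (((himg J' hJ' σ').symm.trans h1).symm)
    subst hJeq
    have hσ : σ = σ' := by
      refine Equiv.ext fun i => ?_
      exact (J.orderEmbOfFin (Finset.mem_powersetCard.mp hJ).2).injective (congrFun h i)
    subst hσ
    rfl
  · intro p hp
    have hpinj : Function.Injective p := (Finset.mem_filter.mp hp).2
    set J : Finset (Fin n) := Finset.univ.image p with hJdef
    have hcard : J.card = k := by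
      rw [hJdef, Finset.card_image_of_injective _ hpinj, Finset.card_univ, Fintype.card_fin]
    have hJ : J ∈ Finset.univ.powersetCard k :=
      Finset.mem_powersetCard.mpr ⟨Finset.subset_univ _, hcard⟩
    have hmem : ∀ i, p i ∈ J := fun i => Finset.mem_image_of_mem p (Finset.mem_univ i)
    have hfinj : Function.Injective
        (fun i => (J.orderIsoOfFin hcard).symm ⟨p i, hmem i⟩) := by
      intro i j hij
      exact hpinj (congrArg Subtype.val ((J.orderIsoOfFin hcard).symm.injective hij))
    refine ⟨⟨⟨J, hJ⟩, Equiv.ofBijective _ (Finite.injective_iff_bijective.mp hfinj)⟩,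
      Finset.mem_sigma.mpr ⟨Finset.mem_attach _ _, Finset.mem_univ _⟩, ?_⟩
    funext i
    show J.orderEmbOfFin (Finset.mem_powersetCard.mp hJ).2
      (Equiv.ofBijective (fun i => (J.orderIsoOfFin hcard).symm ⟨p i, hmem i⟩)
        (Finite.injective_iff_bijective.mp hfinj) i) = p i
    rw [Equiv.ofBijective_apply, ← Finset.coe_orderIsoOfFin_apply, OrderIso.apply_symm_apply]
  · intro x _
    rfl

/-- The inner sum over permutations for a fixed subset. -/
private lemma cb_perJ (a b : Matrix (Fin k) (Fin n) R) (J : Finset (Fin n)) (h : J.card = k) :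
    ∑ σ : Perm (Fin k),
        (∏ i, b i (J.orderEmbOfFin h (σ i))) *
          (a.submatrix id (fun i => J.orderEmbOfFin h (σ i))).det
      = (a.submatrix id (J.orderEmbOfFin h)).det * (b.submatrix id (J.orderEmbOfFin h)).det := by
  have key : ∀ σ : Perm (Fin k),
      (a.submatrix id (fun i => J.orderEmbOfFin h (σ i))).det
        = Perm.sign σ * (a.submatrix id (J.orderEmbOfFin h)).det := by
    intro σ
    rw [show (a.submatrix id (fun i => J.orderEmbOfFin h (σ i)))
        = (a.submatrix id (J.orderEmbOfFin h)).submatrix id σ by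
      rw [submatrix_submatrix]; rfl]
    exact det_permute' σ _
  calc ∑ σ : Perm (Fin k),
        (∏ i, b i (J.orderEmbOfFin h (σ i))) *
          (a.submatrix id (fun i => J.orderEmbOfFin h (σ i))).det
      = (a.submatrix id (J.orderEmbOfFin h)).det *
          ∑ σ : Perm (Fin k), (Perm.sign σ : R) * ∏ i, b i (J.orderEmbOfFin h (σ i)) := by
        rw [Finset.mul_sum]
        refine Fintype.sum_congr _ _ fun σ => ?_
        rw [key σ]; ring
    _ = _ := by
        rw [show ∑ σ : Perm (Fin k), (Perm.sign σ : R) * ∏ i, b i (J.orderEmbOfFin h (σ i))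
            = (b.submatrix id (J.orderEmbOfFin h)).transpose.det by
          rw [det_apply']
          refine Fintype.sum_congr _ _ fun σ => ?_
          simp [transpose_apply, submatrix_apply]]
        rw [det_transpose]

end aux

/-- Cauchy–Binet: for `k×n` matrices `a` and `b` over a commutative ring,
`det(a·b.transpose) = Σ_{J ⊆ {1,…,n}, |J|=k} det(a^J)·det(b^J)`, where `a^J` is the `k×k`
submatrix of `a` with columns indexed by `J`. -/
theorem stmt8 {R : Type*} [CommRing R] {k n : ℕ} (a b : Matrix (Fin k) (Fin n) R) :
    (a * b.transpose).det
      = ∑ J ∈ (Finset.univ.powersetCard k : Finset (Finset (Fin n))).attach,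
          (a.submatrix id (J.1.orderEmbOfFin (Finset.mem_powersetCard.mp J.2).2)).det *
          (b.submatrix id (J.1.orderEmbOfFin (Finset.mem_powersetCard.mp J.2).2)).det := by
  classical
  rw [cb_step1]
  rw [← Finset.sum_filter_add_sum_filter_not Finset.univ (fun p => Function.Injective p)]
  rw [show (∑ p ∈ Finset.univ.filter (fun p : Fin k → Fin n => ¬ Function.Injective p),
      (∏ i, b i (p i)) * (a.submatrix id p).det) = 0 from
    Finset.sum_eq_zero fun p hp => by
      rw [cb_vanish a (Finset.mem_filter.mp hp).2, mul_zero], add_zero]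
  rw [cb_reindex (fun p => (∏ i, b i (p i)) * (a.submatrix id p).det)]
  exact Finset.sum_congr rfl fun J _ => cb_perJ a b J.1 (Finset.mem_powersetCard.mp J.2).2
end

section
/- Let μ be a probability measure on ℂ with infinite support and finite moments of all orders, and let φ₀, …, φ_{n-1} be the orthonormal polynomials with deg φ_k = k. Then there is a constant c_n > 0 such that for all z₁,…,z_n ∈ ℂ: det[K_n(z_i, z_j)]_{i,j=1}^n = c_n · ∏_{1 ≤ i < j ≤ n} |z_i − z_j|², where K_n(z,w) = Σ_{k=0}^{n-1} φ_k(z) · conj(φ_k(w)). -/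
open MeasureTheory Polynomial

/-! The kernel matrix factors as `A Aᴴ` with `A = [φ_k(z_i)]`, and `A` is the Vandermonde matrix
times the upper triangular matrix of coefficients of the `φ_k`, whose diagonal consists of their
leading coefficients. Hence `det K = |∏ lc φ_k|² · |det V(z)|²`. -/

namespace Matrix

variable {R : Type*} [CommRing R] {n : ℕ}

theorem det_matrixOfPolynomials_eq_prod_leadingCoeff (p : Fin n → R[X])
    (h_deg : ∀ i, (p i).natDegree = i) :
    (of fun i j : Fin n => (p j).coeff i).det = ∏ i, (p i).leadingCoeff := by
  rw [det_of_isUpperTriangular (matrixOfPolynomials_blockTriangular p fun i ↦ (h_deg i).le)]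
  refine Finset.prod_congr rfl fun i _ => ?_
  rw [of_apply, ← h_deg i, coeff_natDegree]

theorem det_eval_matrixOfPolynomials_eq_prod_leadingCoeff_mul_det_vandermonde
    (v : Fin n → R) (p : Fin n → R[X]) (h_deg : ∀ i, (p i).natDegree = i) :
    (of fun i j => (p j).eval (v i)).det = (∏ i, (p i).leadingCoeff) * (vandermonde v).det := by
  rw [eval_matrixOfPolynomials_eq_vandermonde_mul_matrixOfPolynomials v p fun i ↦ (h_deg i).le,
    det_mul, det_matrixOfPolynomials_eq_prod_leadingCoeff p h_deg, mul_comm]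

theorem of_sum_range_mul_star_eq_mul_conjTranspose {α : Type*} [Semiring α] [StarRing α]
    {m : Type*} (f : m → ℕ → α) :
    (of fun i j => ∑ k ∈ Finset.range n, f i k * star (f j k))
      = (of fun i (k : Fin n) => f i k) * (of fun i (k : Fin n) => f i k)ᴴ := by
  ext i j
  simp only [of_apply, mul_apply, conjTranspose_apply]
  exact (Fin.sum_univ_eq_sum_range (fun k => f i k * star (f j k)) n).symm

theorem det_mul_conjTranspose_eq_normSq {m : Type*} [Fintype m] [DecidableEq m]
    (A : Matrix m m ℂ) : (A * Aᴴ).det = (Complex.normSq A.det : ℂ) := by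
  rw [det_mul, det_conjTranspose, ← starRingEnd_apply, Complex.mul_conj]

theorem normSq_det_vandermonde (z : Fin n → ℂ) :
    Complex.normSq (vandermonde z).det
      = ∏ i : Fin n, ∏ j ∈ Finset.univ.filter (fun j => i < j), ‖z i - z j‖ ^ 2 := by
  rw [det_vandermonde, map_prod]
  refine Finset.prod_congr rfl fun i _ => ?_
  rw [map_prod]
  refine Finset.prod_congr (by ext j; simp) fun j _ => ?_
  rw [Complex.normSq_eq_norm_sq, norm_sub_rev]

end Matrix

theorem stmt10_general
    (φ : ℕ → Polynomial ℂ) (hdeg : ∀ k, (φ k).degree = (k : ℕ))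
    (n : ℕ) :
    ∃ c : ℝ, 0 < c ∧ ∀ z : Fin n → ℂ,
      (Matrix.of fun i j : Fin n => ∑ k ∈ Finset.range n,
          (φ k).eval (z i) * (starRingEnd ℂ) ((φ k).eval (z j))).det
        = (c : ℂ) * ∏ i : Fin n, ∏ j ∈ Finset.univ.filter (fun j => i < j),
            ((‖z i - z j‖ ^ 2 : ℝ) : ℂ) := by
  have hnatDeg (k : ℕ) : (φ k).natDegree = k := natDegree_eq_of_degree_eq_some (hdeg k)
  have hlc (k : ℕ) : (φ k).leadingCoeff ≠ 0 :=
    leadingCoeff_ne_zero.2 fun h => by simpa [h] using hdeg k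
  refine ⟨Complex.normSq (∏ k : Fin n, (φ k).leadingCoeff),
    Complex.normSq_pos.2 (Finset.prod_ne_zero_iff.2 fun k _ => hlc k), fun z => ?_⟩
  simp_rw [starRingEnd_apply]
  rw [Matrix.of_sum_range_mul_star_eq_mul_conjTranspose (fun i k => (φ k).eval (z i)),
    Matrix.det_mul_conjTranspose_eq_normSq,
    Matrix.det_eval_matrixOfPolynomials_eq_prod_leadingCoeff_mul_det_vandermonde z
      (fun k : Fin n => φ k) fun k => hnatDeg k,
    map_mul, Matrix.normSq_det_vandermonde]
  push_cast
  rfl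

/-- For orthonormal polynomials `φ_k` (with `deg φ_k = k`) of a probability measure `μ`
on `ℂ` with infinite support and finite moments, there is `c_n > 0` such that
`det[K_n(z_i,z_j)] = c_n ∏_{i<j} |z_i − z_j|²`, where
`K_n(z,w) = Σ_{k<n} φ_k(z) conj(φ_k(w))`. -/
theorem stmt10 (μ : Measure ℂ) [IsProbabilityMeasure μ]
    (hsupp : ∀ s : Finset ℂ, μ (↑s : Set ℂ) ≠ 1)
    (hmom : ∀ m : ℕ, Integrable (fun z => ‖z‖ ^ m) μ)
    (φ : ℕ → Polynomial ℂ) (hdeg : ∀ k, (φ k).degree = (k : ℕ))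
    (horth : ∀ j k, ∫ z, (φ j).eval z * (starRingEnd ℂ) ((φ k).eval z) ∂μ
        = if j = k then 1 else 0)
    (n : ℕ) :
    ∃ c : ℝ, 0 < c ∧ ∀ z : Fin n → ℂ,
      (Matrix.of fun i j : Fin n => ∑ k ∈ Finset.range n,
          (φ k).eval (z i) * (starRingEnd ℂ) ((φ k).eval (z j))).det
        = (c : ℂ) * ∏ i : Fin n, ∏ j ∈ Finset.univ.filter (fun j => i < j),
            ((‖z i - z j‖ ^ 2 : ℝ) : ℂ) :=
  stmt10_general φ hdeg n
end

section
/- Let E be finite and H ⊆ ℓ²(E) a subspace with orthogonal complement H^⊥. Then for every B ⊆ E, P^{H^⊥}({E \ B}) = P^H({B}), where P^H is the determinantal measure associated to H. -/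
open Matrix
open scoped RealInnerProductSpace

/-!
A unit vector `ξ` in the span of the wedges of vectors of `H` is `±(b₁ ∧ ⋯ ∧ bᵣ)` for an
orthonormal basis `b` of `H`, since `w` is alternating and `Λʳ H` is a line. Hence
`P^H({B}) = det (bᵢ(xⱼ))²` with `x` enumerating `B`. Completing `b` by an orthonormal basis
of `H^⊥` and ordering the columns as `B` followed by `E ∖ B` gives an orthogonal matrix `X`, and
the two probabilities are the squares of its complementary diagonal blocks `P` and `T`. For
orthogonal `X` one has `det X · det P = det T` with `det X = ±1`.
-/

theorem Matrix.det_toBlocks₁₁_sq_eq_det_toBlocks₂₂_sq {R m n : Type*} [CommRing R]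
    [Fintype m] [DecidableEq m] [Fintype n] [DecidableEq n]
    (X : Matrix (m ⊕ n) (m ⊕ n) R) (hX : X * Xᵀ = 1) :
    X.toBlocks₁₁.det ^ 2 = X.toBlocks₂₂.det ^ 2 := by
  obtain ⟨P, Q, S, T, rfl⟩ : ∃ P Q S T, X = fromBlocks P Q S T :=
    ⟨_, _, _, _, (fromBlocks_toBlocks X).symm⟩
  have hdet : (fromBlocks P Q S T).det ^ 2 = 1 := by
    simpa [det_mul, det_transpose, sq] using congrArg det hX
  rw [fromBlocks_transpose, fromBlocks_multiply, ← fromBlocks_one, fromBlocks_inj] at hX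
  -- its left block column is the left block column of `X * Xᵀ = 1`
  have hcol : fromBlocks P Q S T * fromBlocks Pᵀ 0 Qᵀ 1 = fromBlocks 1 Q 0 T := by
    simp [fromBlocks_multiply, hX.1, hX.2.2.1]
  have hmul : (fromBlocks P Q S T).det * P.det = T.det := by
    simpa [det_fromBlocks_zero₁₂, det_fromBlocks_zero₂₁] using congrArg det hcol
  simp only [toBlocks_fromBlocks₁₁, toBlocks_fromBlocks₂₂]
  rw [← hmul, mul_pow, hdet, one_mul]

theorem AlternatingMap.eq_smulRight_basis_det {R M N ι : Type*} [CommRing R] [AddCommGroup M]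
    [Module R M] [AddCommGroup N] [Module R N] [Fintype ι] [DecidableEq ι]
    (e : Module.Basis ι R M) (f : M [⋀^ι]→ₗ[R] N) : f = e.det.smulRight (f e) := by
  refine e.ext_alternating fun i hi => ?_
  let σ : Equiv.Perm ι := Equiv.ofBijective i (Finite.injective_iff_bijective.1 hi)
  change f (e ∘ σ) = e.det.smulRight (f e) (e ∘ σ)
  simp [AlternatingMap.map_perm, Module.Basis.det_self]

theorem orthonormal_sumElim {𝕜 V ι κ : Type*} [RCLike 𝕜] [NormedAddCommGroup V]
    [InnerProductSpace 𝕜 V] {v : ι → V} {v' : κ → V} (hv : Orthonormal 𝕜 v)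
    (hv' : Orthonormal 𝕜 v') (h : ∀ i j, inner 𝕜 (v i) (v' j) = 0) :
    Orthonormal 𝕜 (Sum.elim v v') := by
  classical
  rw [orthonormal_iff_ite] at *
  rintro (i | i) (j | j)
  · simp [hv]
  · simp [h]
  · simp [inner_eq_zero_symm.mp (h j i)]
  · simp [hv']

theorem EuclideanSpace.mul_transpose_eq_one_of_orthonormal {ι E : Type*} [Fintype ι]
    [DecidableEq ι] [Fintype E] {v : ι → EuclideanSpace ℝ E} (hv : Orthonormal ℝ v)
    (e : ι ≃ E) :
    (of fun p q => v p (e q)) * (of fun p q => v p (e q))ᵀ = 1 := by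
  ext p q
  rw [one_apply, ← orthonormal_iff_ite.mp hv p q, PiLp.inner_apply,
    ← e.sum_comp]
  simp [mul_apply, mul_comm]

namespace MultilinearMap

variable {V W ι : Type*} [NormedAddCommGroup V] [InnerProductSpace ℝ V]
  [NormedAddCommGroup W] [InnerProductSpace ℝ W] [Fintype ι] [DecidableEq ι]

/-- `w` models `Λ^ι V` with its Gram-determinant inner product. -/
def InnerEqDetGram (w : MultilinearMap ℝ (fun _ : ι => V) W) : Prop :=
  ∀ u v, ⟪w u, w v⟫ = (of fun i j => ⟪u i, v j⟫).det

namespace InnerEqDetGram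

variable {w : MultilinearMap ℝ (fun _ : ι => V) W}

theorem map_eq_zero_of_eq (hw : w.InnerEqDetGram) (v : ι → V) {i j : ι} (hv : v i = v j)
    (hij : i ≠ j) : w v = 0 := by
  rw [← inner_self_eq_zero (𝕜 := ℝ), hw]
  exact det_zero_of_row_eq hij (funext fun k => by simp [hv])

def toAlternatingMap (hw : w.InnerEqDetGram) : V [⋀^ι]→ₗ[ℝ] W :=
  { w with map_eq_zero_of_eq' := hw.map_eq_zero_of_eq }

theorem norm_map_of_orthonormal (hw : w.InnerEqDetGram) {u : ι → V}
    (hu : Orthonormal ℝ u) : ‖w u‖ = 1 := by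
  have h : ⟪w u, w u⟫ = 1 := by
    rw [hw, ← det_one (n := ι) (R := ℝ)]
    congr 1
    ext i j
    simp [orthonormal_iff_ite.mp hu, one_apply]
  rwa [real_inner_self_eq_norm_sq, pow_eq_one_iff_of_nonneg (norm_nonneg _) two_ne_zero] at h

theorem span_le_span_singleton (hw : w.InnerEqDetGram) (K : Submodule ℝ V)
    (b : Module.Basis ι ℝ K) :
    Submodule.span ℝ {x | ∃ v : ι → V, (∀ i, v i ∈ K) ∧ w v = x}
      ≤ Submodule.span ℝ {w fun i => b i} := by
  rw [Submodule.span_le]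
  rintro _ ⟨v, hv, rfl⟩
  have := congrArg (· fun i => ⟨v i, hv i⟩)
    (AlternatingMap.eq_smulRight_basis_det b (hw.toAlternatingMap.compLinearMap K.subtype))
  exact Submodule.mem_span_singleton.mpr ⟨_, this.symm⟩

theorem inner_sq_eq_det_sq (hw : w.InnerEqDetGram) (K : Submodule ℝ V)
    (b : OrthonormalBasis ι ℝ K) {ξ : W}
    (hξmem : ξ ∈ Submodule.span ℝ {x | ∃ v : ι → V, (∀ i, v i ∈ K) ∧ w v = x})
    (hξ : ‖ξ‖ = 1) (t : ι → V) :
    ⟪ξ, w t⟫ ^ 2 = (of fun i j => ⟪(b i : V), t j⟫).det ^ 2 := by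
  have hb : Orthonormal ℝ fun i => (b i : V) := b.orthonormal.comp_linearIsometry K.subtypeₗᵢ
  obtain ⟨c, rfl⟩ := Submodule.mem_span_singleton.mp
    (hw.span_le_span_singleton K b.toBasis (by simpa using hξmem))
  have hc : c ^ 2 = 1 := by
    rw [norm_smul, OrthonormalBasis.coe_toBasis, hw.norm_map_of_orthonormal hb, mul_one,
      Real.norm_eq_abs] at hξ
    rw [← sq_abs, hξ, one_pow]
  rw [real_inner_smul_left, mul_pow, hc, one_mul, OrthonormalBasis.coe_toBasis, hw]

end InnerEqDetGram

end MultilinearMap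

def Finset.finSumComplEquiv {E : Type*} [LinearOrder E] [Fintype E] (B : Finset E)
    {r s : ℕ} (hB : B.card = r) (hBc : Bᶜ.card = s) : Fin r ⊕ Fin s ≃ E :=
  (Equiv.sumCongr (B.orderIsoOfFin hB).toEquiv ((Bᶜ.orderIsoOfFin hBc).toEquiv.trans
    (Equiv.subtypeEquivRight fun _ => Finset.mem_compl))).trans (Equiv.sumCompl (· ∈ B))

theorem EuclideanSpace.det_sq_inner_single_eq_of_orthogonal {E ι κ : Type*} [Fintype E]
    [DecidableEq E] [Fintype ι] [DecidableEq ι] [Fintype κ] [DecidableEq κ]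
    (K : Submodule ℝ (EuclideanSpace ℝ E)) (b : OrthonormalBasis ι ℝ K)
    (b' : OrthonormalBasis κ ℝ Kᗮ) (e : ι ⊕ κ ≃ E) :
    (of fun i j => ⟪(b i : EuclideanSpace ℝ E), single (e (.inl j)) 1⟫).det ^ 2
      = (of fun i j => ⟪(b' i : EuclideanSpace ℝ E), single (e (.inr j)) 1⟫).det ^ 2 := by
  have hv : Orthonormal ℝ (Sum.elim (fun i => (b i : EuclideanSpace ℝ E)) fun i => b' i) :=
    orthonormal_sumElim (b.orthonormal.comp_linearIsometry K.subtypeₗᵢ)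
      (b'.orthonormal.comp_linearIsometry Kᗮ.subtypeₗᵢ)
      fun i j => Submodule.inner_right_of_mem_orthogonal (b i).2 (b' j).2
  simpa [inner_single_right, toBlocks₁₁, toBlocks₂₂] using
    det_toBlocks₁₁_sq_eq_det_toBlocks₂₂_sq _ (mul_transpose_eq_one_of_orthonormal hv e)

/-- Duality: `P^{H^⊥}({E ∖ B}) = P^H({B})` for every `B ⊆ E`.  Here `W` with `w`
models `Λʳ ℓ²(E)` (`r = dim H`) and `W'` with `w'` models `Λ^{|E|−r} ℓ²(E)`, both
with the determinantal inner product; `ξ` and `ξ'` are unit multivectors of `H`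
and `H^⊥` respectively; and `P^H({B}) = |⟨ξ, θ_B⟩|²` when `|B| = r`, else `0`. -/
theorem stmt13 {E W W' : Type*} [Fintype E] [LinearOrder E]
    [NormedAddCommGroup W] [InnerProductSpace ℝ W]
    [NormedAddCommGroup W'] [InnerProductSpace ℝ W']
    (H : Submodule ℝ (EuclideanSpace ℝ E)) {r : ℕ} (hH : Module.finrank ℝ H = r)
    (w : MultilinearMap ℝ (fun _ : Fin r => EuclideanSpace ℝ E) W)
    (hw : ∀ u v, (inner ℝ (w u) (w v) : ℝ)
      = (Matrix.of fun i j => (inner ℝ (u i) (v j) : ℝ)).det)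
    (w' : MultilinearMap ℝ (fun _ : Fin (Fintype.card E - r) => EuclideanSpace ℝ E) W')
    (hw' : ∀ u v, (inner ℝ (w' u) (w' v) : ℝ)
      = (Matrix.of fun i j => (inner ℝ (u i) (v j) : ℝ)).det)
    (ξ : W)
    (hξmem : ξ ∈ Submodule.span ℝ
      {x : W | ∃ v : Fin r → EuclideanSpace ℝ E, (∀ i, v i ∈ H) ∧ w v = x})
    (hξ : ‖ξ‖ = 1)
    (ξ' : W')
    (hξ'mem : ξ' ∈ Submodule.span ℝ
      {x : W' | ∃ v : Fin (Fintype.card E - r) → EuclideanSpace ℝ E,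
        (∀ i, v i ∈ Hᗮ) ∧ w' v = x})
    (hξ' : ‖ξ'‖ = 1)
    (B : Finset E) :
    (if h : Bᶜ.card = Fintype.card E - r then
        (inner ℝ ξ' (w' (fun i => EuclideanSpace.single (Bᶜ.orderEmbOfFin h i) (1:ℝ))) : ℝ) ^ 2
      else 0)
    = (if h : B.card = r then
        (inner ℝ ξ (w (fun i => EuclideanSpace.single (B.orderEmbOfFin h i) (1:ℝ))) : ℝ) ^ 2
      else 0) := by
  by_cases hB : B.card = r
  swap
  · have hrE : r ≤ Fintype.card E := by simpa [hH] using H.finrank_le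
    have hBc : Bᶜ.card ≠ Fintype.card E - r := by
      have := B.card_le_univ
      rw [Finset.card_compl]
      omega
    rw [dif_neg hB, dif_neg hBc]
  have hBc : Bᶜ.card = Fintype.card E - r := by rw [Finset.card_compl, hB]
  have hH' : Module.finrank ℝ Hᗮ = Fintype.card E - r := by
    rw [← hH, ← finrank_euclideanSpace (𝕜 := ℝ), ← H.finrank_add_finrank_orthogonal,
      Nat.add_sub_cancel_left]
  rw [dif_pos hB, dif_pos hBc,
    MultilinearMap.InnerEqDetGram.inner_sq_eq_det_sq hw H
      ((stdOrthonormalBasis ℝ H).reindex (finCongr hH)) hξmem hξ,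
    MultilinearMap.InnerEqDetGram.inner_sq_eq_det_sq hw' Hᗮ
      ((stdOrthonormalBasis ℝ Hᗮ).reindex (finCongr hH')) hξ'mem hξ']
  exact (EuclideanSpace.det_sq_inner_single_eq_of_orthogonal H _ _
    (B.finSumComplEquiv hB hBc)).symm
end

section
/- Let E be finite, H ⊆ ℓ²(E) a subspace of dimension r with basis v₁,…,v_r. Then for distinct e₁,…,e_r ∈ E: P^H({e₁,…,e_r}) = (det[⟨v_i, e_j⟩])² / det[⟨v_i, v_j⟩] (in the real case). -/
open scoped RealInnerProductSpace

open Matrix Submodule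

/-!
If `u i = ∑ k, A i k • v k`, the Gram matrices of `(u, u)`, `(u, v)` and `(v, v)` are
`A G Aᵀ`, `A G` and `G`, so the determinantal inner product gives
`‖w u - det A • w v‖² = 0`. Hence every unit multivector of `H` is `ξ = c • w v` with
`c² det G = 1`, and `⟪ξ, θ_B⟫ = c · det[⟨v_i, e_j⟩]` up to the sign of the permutation that
sorts `e`.
-/

theorem eq_smul_of_inner_self_eq_of_inner_eq {F : Type*} [NormedAddCommGroup F]
    [InnerProductSpace ℝ F] {x y : F} {c : ℝ} (hxx : ⟪x, x⟫ = c ^ 2 * ⟪y, y⟫)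
    (hxy : ⟪x, y⟫ = c * ⟪y, y⟫) : x = c • y := by
  rw [← sub_eq_zero, ← inner_self_eq_zero (𝕜 := ℝ), inner_sub_sub_self, real_inner_smul_left,
    real_inner_smul_right, real_inner_smul_left, real_inner_smul_right, real_inner_comm x y]
  linear_combination hxx - 2 * c * hxy

section InnerMatrix

variable {F : Type*} [NormedAddCommGroup F] [InnerProductSpace ℝ F] {m n : ℕ}

theorem of_inner_sum_smul_left (A : Matrix (Fin m) (Fin n) ℝ) (v : Fin n → F) (u : Fin m → F) :
    (Matrix.of fun i j => ⟪∑ k, A i k • v k, u j⟫) = A * Matrix.of fun i j => ⟪v i, u j⟫ := by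
  ext i j
  simp only [of_apply, sum_inner, real_inner_smul_left, mul_apply]

theorem of_inner_sum_smul_right (A : Matrix (Fin m) (Fin n) ℝ) (v : Fin n → F) (u : Fin m → F) :
    (Matrix.of fun i j => ⟪u i, ∑ k, A j k • v k⟫) = (Matrix.of fun i j => ⟪u i, v j⟫) * Aᵀ := by
  ext i j
  simp only [of_apply, inner_sum, real_inner_smul_right, mul_apply, transpose_apply, mul_comm]

end InnerMatrix

section DeterminantalInner

variable {F W : Type*} [NormedAddCommGroup F] [InnerProductSpace ℝ F]
  [NormedAddCommGroup W] [InnerProductSpace ℝ W] {r : ℕ}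
  {w : MultilinearMap ℝ (fun _ : Fin r => F) W}

theorem map_sum_smul_eq_det_smul
    (hw : ∀ u v, ⟪w u, w v⟫ = (Matrix.of fun i j => ⟪u i, v j⟫).det)
    (A : Matrix (Fin r) (Fin r) ℝ) (v : Fin r → F) :
    w (fun i => ∑ k, A i k • v k) = A.det • w v := by
  refine eq_smul_of_inner_self_eq_of_inner_eq ?_ ?_
  · rw [hw, hw, of_inner_sum_smul_left, of_inner_sum_smul_right, det_mul, det_mul, det_transpose]
    ring
  · rw [hw, hw, of_inner_sum_smul_left, det_mul]

theorem span_map_le_span_singleton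
    (hw : ∀ u v, ⟪w u, w v⟫ = (Matrix.of fun i j => ⟪u i, v j⟫).det) (v : Fin r → F) :
    span ℝ {x | ∃ u : Fin r → F, (∀ i, u i ∈ span ℝ (Set.range v)) ∧ w u = x} ≤ ℝ ∙ w v := by
  refine span_le.mpr ?_
  rintro _ ⟨u, hu, rfl⟩
  choose A hA using fun i => (mem_span_range_iff_exists_fun ℝ).mp (hu i)
  obtain rfl : (fun i => ∑ k, A i k • v k) = u := funext hA
  exact mem_span_singleton.mpr
    ⟨(Matrix.of A).det, (map_sum_smul_eq_det_smul hw (Matrix.of A) v).symm⟩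

end DeterminantalInner

theorem Function.Injective.exists_perm_comp_eq {ι α : Type*} [Finite ι] {e f : ι → α}
    (he : Function.Injective e) (hef : Set.range e ⊆ Set.range f) :
    ∃ σ : Equiv.Perm ι, f ∘ σ = e := by
  choose g hg using fun i => hef (Set.mem_range_self i)
  have hg_inj : Function.Injective g := fun i j hij => he (by rw [← hg i, ← hg j, hij])
  exact ⟨Equiv.ofBijective g hg_inj.bijective_of_finite, funext hg⟩

theorem Matrix.det_submatrix_perm_sq {n R : Type*} [Fintype n] [DecidableEq n] [CommRing R]
    (M : Matrix n n R) (σ : Equiv.Perm n) : (M.submatrix id σ).det ^ 2 = M.det ^ 2 := by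
  rw [det_permute', mul_pow, ← Int.cast_pow, ← Units.val_pow_eq_pow_val, Int.units_sq]
  simp

theorem stmt14_general {E W : Type*} [Fintype E] [LinearOrder E]
    [NormedAddCommGroup W] [InnerProductSpace ℝ W]
    {r : ℕ} (w : MultilinearMap ℝ (fun _ : Fin r => EuclideanSpace ℝ E) W)
    (hw : ∀ u v, (inner ℝ (w u) (w v) : ℝ)
      = (Matrix.of fun i j => (inner ℝ (u i) (v j) : ℝ)).det)
    (v : Fin r → EuclideanSpace ℝ E)
    (H : Submodule ℝ (EuclideanSpace ℝ E)) (hH : Submodule.span ℝ (Set.range v) = H)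
    (ξ : W)
    (hξmem : ξ ∈ Submodule.span ℝ
      {x : W | ∃ u : Fin r → EuclideanSpace ℝ E, (∀ i, u i ∈ H) ∧ w u = x})
    (hξ : ‖ξ‖ = 1)
    (e : Fin r → E) (he : Function.Injective e)
    (hcard : (Finset.image e Finset.univ).card = r) :
    (inner ℝ ξ (w (fun i => EuclideanSpace.single
        ((Finset.image e Finset.univ).orderEmbOfFin hcard i) (1:ℝ))) : ℝ) ^ 2
      = (Matrix.of fun i j =>
            (inner ℝ (v i) (EuclideanSpace.single (e j) (1:ℝ)) : ℝ)).det ^ 2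
        / (Matrix.of fun i j => (inner ℝ (v i) (v j) : ℝ)).det := by
  subst hH
  obtain ⟨c, rfl⟩ := mem_span_singleton.mp (span_map_le_span_singleton hw v hξmem)
  have hc : c ^ 2 * (Matrix.of fun i j => ⟪v i, v j⟫).det = 1 :=
    calc c ^ 2 * (Matrix.of fun i j => ⟪v i, v j⟫).det = ⟪c • w v, c • w v⟫ := by
          rw [real_inner_smul_left, real_inner_smul_right, hw]; ring
      _ = 1 := by rw [real_inner_self_eq_norm_sq, hξ, one_pow]
  set f := (Finset.image e Finset.univ).orderEmbOfFin hcard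
  obtain ⟨σ, hσ⟩ : ∃ σ : Equiv.Perm (Fin r), f ∘ σ = e :=
    he.exists_perm_comp_eq (by simp [f, Finset.range_orderEmbOfFin])
  clear_value f
  subst hσ
  set M := Matrix.of fun i j => ⟪v i, EuclideanSpace.single (f j) (1:ℝ)⟫
  have hperm : (Matrix.of fun i j => ⟪v i, EuclideanSpace.single ((f ∘ σ) j) (1:ℝ)⟫).det ^ 2
      = M.det ^ 2 :=
    M.det_submatrix_perm_sq σ
  rw [real_inner_smul_left, hw, mul_pow, hperm, eq_div_iff (right_ne_zero_of_mul_eq_one hc)]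
  linear_combination M.det ^ 2 * hc

/-- For `H = span(v₁,…,v_r)` with the `v_i` linearly independent and distinct points
`e₁,…,e_r ∈ E`, `P^H({e₁,…,e_r}) = (det[⟨v_i, e_j⟩])² / det[⟨v_i, v_j⟩]`.
Here `W` with `w` models `Λʳ ℓ²(E)` with the determinantal inner product, `ξ` is a
unit multivector of `H`, and `P^H({B}) = |⟨ξ, θ_B⟩|²`. -/
theorem stmt14 {E W : Type*} [Fintype E] [LinearOrder E]
    [NormedAddCommGroup W] [InnerProductSpace ℝ W]
    {r : ℕ} (w : MultilinearMap ℝ (fun _ : Fin r => EuclideanSpace ℝ E) W)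
    (hw : ∀ u v, (inner ℝ (w u) (w v) : ℝ)
      = (Matrix.of fun i j => (inner ℝ (u i) (v j) : ℝ)).det)
    (v : Fin r → EuclideanSpace ℝ E) (hv : LinearIndependent ℝ v)
    (H : Submodule ℝ (EuclideanSpace ℝ E)) (hH : Submodule.span ℝ (Set.range v) = H)
    (ξ : W)
    (hξmem : ξ ∈ Submodule.span ℝ
      {x : W | ∃ u : Fin r → EuclideanSpace ℝ E, (∀ i, u i ∈ H) ∧ w u = x})
    (hξ : ‖ξ‖ = 1)
    (e : Fin r → E) (he : Function.Injective e)
    (hcard : (Finset.image e Finset.univ).card = r) :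
    (inner ℝ ξ (w (fun i => EuclideanSpace.single
        ((Finset.image e Finset.univ).orderEmbOfFin hcard i) (1:ℝ))) : ℝ) ^ 2
      = (Matrix.of fun i j =>
            (inner ℝ (v i) (EuclideanSpace.single (e j) (1:ℝ)) : ℝ)).det ^ 2
        / (Matrix.of fun i j => (inner ℝ (v i) (v j) : ℝ)).det :=
  stmt14_general w hw v H hH ξ hξmem hξ e he hcard
end

section
/- Let E be finite and Q = Σ_k λ_k P_{[v_k]} a spectral decomposition of a symmetric positive contraction Q on ℓ²(E), where the v_k are orthonormal and λ_k ∈ [0,1]. Let I_k be independent Bernoulli(λ_k) random variables and let 𝐇 := span{v_k : I_k = 1}. Then for every A ⊆ E, det(Q↾A) = E[det((P_𝐇)↾A)], where P_𝐇 is the orthogonal projection onto the random subspace 𝐇. -/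
/-!
Expanding `det (Q↾A)` multilinearly along the rows of `Q = ∑ₖ λₖ vₖ vₖᵀ` writes it as a sum over
maps `t : A → Fin m` of `∏ₐ λ_{t a}` times a coefficient that vanishes unless `t` is injective,
since otherwise the expansion has two equal rows. So `det (Q↾A)` is multi-affine in `λ`, and the
projection `P_𝐇` has the same expansion with `λ` replaced by the indicator of `{k | I k = 1}`.
A product of indicators of distinct independent Bernoulli variables has expectation `∏ λ`.
-/

open Finset

section BernoulliWeight

variable {ι R : Type*} [Fintype ι] [DecidableEq ι] [CommRing R]

/-- The probability that `{k | I k = 1} = S` for independent `I k ∼ Bernoulli (p k)`. -/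
def bernoulliWeight (p : ι → R) (S : Finset ι) : R :=
  (∏ k ∈ S, p k) * ∏ k ∈ Sᶜ, (1 - p k)

theorem sum_bernoulliWeight_mul_prod_indicator (p : ι → R) (T : Finset ι) :
    ∑ S, bernoulliWeight p S * ∏ k ∈ T, (if k ∈ S then (1 : R) else 0) = ∏ k ∈ T, p k := by
  have hT (S : Finset ι) : ∏ k ∈ T, (if k ∈ S then (1 : R) else 0)
      = ∏ k ∈ Sᶜ, (if k ∉ T then (1 : R) else 0) := by
    simp only [prod_boole, mem_compl, not_imp_not]
    congr
  calc ∑ S, bernoulliWeight p S * ∏ k ∈ T, (if k ∈ S then (1 : R) else 0)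
      = ∑ S ∈ univ.powerset, (∏ k ∈ S, p k) *
          ∏ k ∈ univ \ S, (if k ∉ T then 1 - p k else 0) := by
        refine sum_congr powerset_univ.symm fun S _ => ?_
        rw [bernoulliWeight, hT, ← compl_eq_univ_sdiff, mul_assoc, ← prod_mul_distrib]
        congr 2 with k
        split_ifs <;> ring
    _ = ∏ k, (p k + if k ∉ T then 1 - p k else 0) := (prod_add _ _ _).symm
    _ = ∏ k ∈ T, p k := by
        rw [← Fintype.prod_ite_mem T p]
        congr 1 with k
        split_ifs <;> ring

variable {n : Type*} [Fintype n]

theorem sum_bernoulliWeight_mul_prod_indicator_comp (p : ι → R) {t : n → ι}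
    (ht : Function.Injective t) :
    ∑ S, bernoulliWeight p S * ∏ i, (if t i ∈ S then (1 : R) else 0) = ∏ i, p (t i) := by
  simpa only [prod_map, Function.Embedding.coeFn_mk] using
    sum_bernoulliWeight_mul_prod_indicator p (univ.map ⟨t, ht⟩)

theorem sum_bernoulliWeight_mul_sum_prod_indicator [DecidableEq n] (p : ι → R) (C : (n → ι) → R)
    (hC : ∀ t, ¬Function.Injective t → C t = 0) :
    ∑ S, bernoulliWeight p S * ∑ t : n → ι, (∏ i, (if t i ∈ S then (1 : R) else 0)) * C t
      = ∑ t : n → ι, (∏ i, p (t i)) * C t := by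
  simp_rw [mul_sum]
  rw [sum_comm]
  refine sum_congr rfl fun t _ => ?_
  by_cases ht : Function.Injective t
  · simp_rw [← sum_bernoulliWeight_mul_prod_indicator_comp p ht, sum_mul, mul_assoc]
  · simp [hC t ht]

end BernoulliWeight

theorem Matrix.det_submatrix_of_sum_mul_mul {ι n m R : Type*} [Fintype ι] [Fintype m]
    [DecidableEq m] [CommRing R] (w : ι → R) (x y : ι → n → R) (r c : m → n) :
    ((Matrix.of fun i j => ∑ k, w k * x k i * y k j).submatrix r c).det
      = ∑ t : m → ι, (∏ i, w (t i)) *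
          ((∏ i, x (t i) (r i)) * (Matrix.of fun i j => y (t i) (c j)).det) := by
  have hrows : (Matrix.of fun i j => ∑ k, w k * x k i * y k j).submatrix r c
      = fun i => ∑ k, (w k * x k (r i)) • fun j => y k (c j) := by
    ext i j
    simp
  unfold Matrix.det
  rw [hrows, ← AlternatingMap.coe_multilinearMap, MultilinearMap.map_sum]
  refine sum_congr rfl fun t _ => ?_
  rw [AlternatingMap.coe_multilinearMap, AlternatingMap.map_smul_univ, prod_mul_distrib,
    smul_eq_mul, mul_assoc]
  rfl

theorem Matrix.det_of_comp_eq_zero_of_not_injective {n ι R : Type*} [Fintype n] [DecidableEq n]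
    [CommRing R] (y : ι → n → R) {t : n → ι} (ht : ¬Function.Injective t) :
    (Matrix.of fun i j => y (t i) j).det = 0 := by
  obtain ⟨i, j, hij, hne⟩ : ∃ i j, t i = t j ∧ i ≠ j := by
    simpa [Function.Injective] using ht
  exact Matrix.det_zero_of_row_eq hne (funext fun k => by simp [hij])

theorem Orthonormal.orthogonalProjectionOnto_span_image_apply {𝕜 F ι : Type*} [RCLike 𝕜]
    [NormedAddCommGroup F] [InnerProductSpace 𝕜 F] {v : ι → F} (hv : Orthonormal 𝕜 v)
    (S : Finset ι) [(Submodule.span 𝕜 (v '' S)).HasOrthogonalProjection] (x : F) :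
    ((Submodule.span 𝕜 (v '' S)).orthogonalProjectionOnto x : F)
      = ∑ k ∈ S, inner 𝕜 (v k) x • v k := by
  classical
  -- `rw [← coe_image]` would fail: the instance argument depends on the submodule.
  have key : ∀ (U : Submodule 𝕜 F) [U.HasOrthogonalProjection],
      U = Submodule.span 𝕜 ↑(S.image v) →
      (U.orthogonalProjectionOnto x : F) = ∑ k ∈ S, inner 𝕜 (v k) x • v k := by
    rintro U _ rfl
    rw [(OrthonormalBasis.span hv S).orthogonalProjectionOnto_apply_eq_sum]
    simp only [OrthonormalBasis.span_apply, Submodule.coe_sum, Submodule.coe_smul]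
    exact sum_coe_sort S fun k => inner 𝕜 (v k) x • v k
  exact key _ (by rw [coe_image])

theorem EuclideanSpace.inner_single_orthogonalProjectionOnto_span {E ι : Type*} [Fintype E]
    [DecidableEq E] {v : ι → EuclideanSpace ℝ E} (hv : Orthonormal ℝ v) (S : Finset ι) (e f : E) :
    inner ℝ (EuclideanSpace.single f (1 : ℝ))
        ((Submodule.span ℝ (v '' S)).orthogonalProjectionOnto (EuclideanSpace.single e 1) :
          EuclideanSpace ℝ E)
      = ∑ k ∈ S, v k e * v k f := by
  rw [hv.orthogonalProjectionOnto_span_image_apply, inner_sum]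
  refine sum_congr rfl fun k _ => ?_
  rw [real_inner_smul_right, EuclideanSpace.inner_single_left, EuclideanSpace.inner_single_right]
  simp

theorem stmt15_general {E : Type*} [Fintype E] [DecidableEq E]
    {m : ℕ} (lam : Fin m → ℝ)
    (v : Fin m → EuclideanSpace ℝ E) (hv : Orthonormal ℝ v)
    (Q : Matrix E E ℝ)
    (hQ : Q = Matrix.of fun e f => ∑ k, lam k * v k e * v k f)
    (A : Finset E) :
    (Q.submatrix (fun a : A => (a : E)) (fun a : A => (a : E))).det
      = ∑ S : Finset (Fin m),
          ((∏ k ∈ S, lam k) * ∏ k ∈ Sᶜ, (1 - lam k)) *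
          ((Matrix.of fun e f : E =>
              (inner ℝ (EuclideanSpace.single f (1:ℝ))
                ((Submodule.orthogonalProjectionOnto (Submodule.span ℝ (v '' ↑S))
                    (EuclideanSpace.single e (1:ℝ)) : EuclideanSpace ℝ E)) : ℝ)).submatrix
            (fun a : A => (a : E)) (fun a : A => (a : E))).det := by
  have hproj (S : Finset (Fin m)) :
      (Matrix.of fun e f : E =>
        (inner ℝ (EuclideanSpace.single f (1:ℝ))
          ((Submodule.orthogonalProjectionOnto (Submodule.span ℝ (v '' ↑S))
            (EuclideanSpace.single e (1:ℝ)) : EuclideanSpace ℝ E)) : ℝ))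
        = Matrix.of fun e f => ∑ k, (if k ∈ S then (1 : ℝ) else 0) * v k e * v k f := by
    ext e f
    rw [Matrix.of_apply, Matrix.of_apply,
      EuclideanSpace.inner_single_orthogonalProjectionOnto_span hv]
    simp [ite_mul]
  simp_rw [hQ, hproj, Matrix.det_submatrix_of_sum_mul_mul]
  exact (sum_bernoulliWeight_mul_sum_prod_indicator lam _ fun t ht => mul_eq_zero_of_right _ <|
    Matrix.det_of_comp_eq_zero_of_not_injective (fun k (j : A) => v k j) ht).symm

/-- Spectral mixture: if `Q = Σ_k λ_k P_{[v_k]}` with `v_k` orthonormal and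
`λ_k ∈ [0,1]`, and `I_k ∼ Bern(λ_k)` are independent (so a set `S` of indices occurs
with probability `∏_{k∈S} λ_k ∏_{k∉S} (1−λ_k)`), then for every `A ⊆ E`,
`det(Q↾A) = E[det((P_𝐇)↾A)]` where `𝐇 = span{v_k : k ∈ S}`. -/
theorem stmt15 {E : Type*} [Fintype E] [DecidableEq E]
    {m : ℕ} (lam : Fin m → ℝ) (hlam : ∀ k, lam k ∈ Set.Icc (0:ℝ) 1)
    (v : Fin m → EuclideanSpace ℝ E) (hv : Orthonormal ℝ v)
    (Q : Matrix E E ℝ)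
    (hQ : Q = Matrix.of fun e f => ∑ k, lam k * v k e * v k f)
    (A : Finset E) :
    (Q.submatrix (fun a : A => (a : E)) (fun a : A => (a : E))).det
      = ∑ S : Finset (Fin m),
          ((∏ k ∈ S, lam k) * ∏ k ∈ Sᶜ, (1 - lam k)) *
          ((Matrix.of fun e f : E =>
              (inner ℝ (EuclideanSpace.single f (1:ℝ))
                ((Submodule.orthogonalProjectionOnto (Submodule.span ℝ (v '' ↑S))
                    (EuclideanSpace.single e (1:ℝ)) : EuclideanSpace ℝ E)) : ℝ)).submatrix
            (fun a : A => (a : E)) (fun a : A => (a : E))).det :=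
  stmt15_general lam v hv Q hQ A
end

section
/- Let G = (V, 𝖤) be a finite connected graph with an orientation of each edge, M its signed vertex-edge incidence matrix, and star_x the row of M at vertex x. Fix x₀ ∈ V. Then the number of spanning trees of G equals det[⟨star_x, star_y⟩]_{x,y ∈ V ∖ {x₀}} (the Matrix-Tree theorem). -/
/-!
Let `N` be the signed incidence matrix with the row of `x₀` deleted. By Cauchy–Binet,
`det (N Nᵀ)` is the sum of the squares of the maximal minors of `N`, one for each set `S` of
`|V| - 1` edges. If `S` spans a connected graph, the minor is `±1`: the flows along walks from
the vertices to `x₀` form an integer inverse of it. Otherwise the indicator of a component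
avoiding `x₀` is a nonzero vector in its left kernel. A connected graph with `|V| - 1` edges is
a tree.
-/

open Finset Matrix Function

theorem Function.Injective.exists_perm_comp_eq_s17 {n m : Type*} {f g : n → m} (hf : Injective f)
    (hg : Injective g) (h : Set.range f = Set.range g) : ∃ σ : Equiv.Perm n, g ∘ σ = f :=
  ⟨(Equiv.ofInjective f hf).trans ((Equiv.setCongr h).trans (Equiv.ofInjective g hg).symm),
    funext fun _ => Equiv.apply_ofInjective_symm hg _⟩

section Enum

variable {n m : Type*} [Fintype n]

noncomputable def subsetEnum (S : {S : Finset m // S.card = Fintype.card n}) : n → m :=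
  Subtype.val ∘ Fintype.equivOfCardEq (α := n) (β := S.1) (by rw [Fintype.card_coe, S.2])

theorem subsetEnum_injective (S : {S : Finset m // S.card = Fintype.card n}) :
    Injective (subsetEnum S) :=
  fun _ _ h => (Equiv.injective _) (Subtype.val_injective h)

theorem range_subsetEnum (S : {S : Finset m // S.card = Fintype.card n}) :
    Set.range (subsetEnum S) = S.1 := by
  rw [subsetEnum, Set.range_comp, Equiv.range_eq_univ, Set.image_univ, Subtype.range_coe]

theorem image_subsetEnum [DecidableEq m] (S : {S : Finset m // S.card = Fintype.card n}) :
    univ.image (subsetEnum S) = S.1 := by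
  rw [← coe_inj, coe_image, coe_univ, Set.image_univ, range_subsetEnum]

theorem bijective_subsetEnum_comp_perm :
    Bijective fun p : {S : Finset m // S.card = Fintype.card n} × Equiv.Perm n =>
      (⟨subsetEnum p.1 ∘ p.2, (subsetEnum_injective p.1).comp p.2.injective⟩ :
        {f : n → m // Injective f}) := by
  have hrange (S : {S : Finset m // S.card = Fintype.card n}) (σ : Equiv.Perm n) :
      Set.range (subsetEnum S ∘ σ) = S.1 := by
    rw [Set.range_comp, σ.range_eq_univ, Set.image_univ, range_subsetEnum]
  refine ⟨fun ⟨S, σ⟩ ⟨T, τ⟩ h => ?_, fun ⟨f, hf⟩ => ?_⟩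
  · have hfun : subsetEnum S ∘ σ = subsetEnum T ∘ τ := congrArg Subtype.val h
    obtain rfl : S = T := Subtype.ext (coe_injective (by rw [← hrange S σ, hfun, hrange]))
    exact Prod.ext rfl (Equiv.ext fun i => subsetEnum_injective S (congrFun hfun i))
  · classical
    let S : {S : Finset m // S.card = Fintype.card n} :=
      ⟨univ.image f, by rw [card_image_of_injective _ hf, card_univ]⟩
    obtain ⟨σ, hσ⟩ := hf.exists_perm_comp_eq_s17 (subsetEnum_injective S)
      (by rw [range_subsetEnum]; simp [S])
    exact ⟨(S, σ), Subtype.ext hσ⟩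

end Enum

namespace Matrix

section Submatrix

variable {l m ι κ R : Type*} [NonUnitalNonAssocSemiring R]

theorem submatrix_mulVec_comp [Fintype ι] [Fintype κ] (A : Matrix m ι R) (r : l → m)
    {g : κ → ι} (hg : Injective g) {v : ι → R} (hv : ∀ i ∉ Set.range g, v i = 0) :
    A.submatrix r g *ᵥ (v ∘ g) = (A *ᵥ v) ∘ r := by
  funext x
  exact Fintype.sum_of_injective g hg _ _ (fun i hi => by simp [hv i hi]) fun _ => rfl

theorem comp_vecMul_submatrix [Fintype l] [Fintype m] (A : Matrix m ι R) {r : l → m}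
    (hr : Injective r) {v : m → R} (hv : ∀ x ∉ Set.range r, v x = 0) (g : κ → ι) :
    (v ∘ r) ᵥ* A.submatrix r g = (v ᵥ* A) ∘ g := by
  funext j
  exact Fintype.sum_of_injective r hr _ _ (fun x hx => by simp [hv x hx]) fun _ => rfl

end Submatrix

section CauchyBinet

variable {n m R : Type*} [Fintype n] [DecidableEq n] [CommRing R]

theorem det_mul_eq_sum_prod_mul_det_submatrix [Fintype m] (A : Matrix n m R)
    (B : Matrix m n R) :
    (A * B).det = ∑ f : n → m, (∏ i, B (f i) i) * (A.submatrix id f).det := by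
  simp only [det_apply' (A * B), mul_apply, prod_univ_sum, mul_sum, Fintype.piFinset_univ]
  rw [sum_comm]
  refine sum_congr rfl fun f _ => ?_
  simp only [det_apply', submatrix_apply, id_eq, prod_mul_distrib, mul_sum]
  exact sum_congr rfl fun σ _ => by ring

theorem det_submatrix_eq_zero_of_not_injective (A : Matrix n m R) {f : n → m}
    (hf : ¬ Injective f) : (A.submatrix id f).det = 0 := by
  obtain ⟨i, j, hij, hne⟩ := Function.not_injective_iff.mp hf
  exact det_zero_of_column_eq hne fun k => by simp [hij]

theorem sum_perm_prod_mul_det_submatrix_comp (A : Matrix n m R) (B : Matrix m n R) (g : n → m) :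
    ∑ σ : Equiv.Perm n, (∏ i, B (g (σ i)) i) * (A.submatrix id (g ∘ σ)).det
      = (A.submatrix id g).det * (B.submatrix g id).det := by
  have hperm (σ : Equiv.Perm n) : A.submatrix id (g ∘ σ) = (A.submatrix id g).submatrix id σ :=
    rfl
  simp only [hperm, det_permute', det_apply' (B.submatrix g id), mul_sum]
  exact sum_congr rfl fun σ _ => by simp only [submatrix_apply, id_eq]; ring

theorem det_mul_eq_sum_det_mul_det [Fintype m] (A : Matrix n m R) (B : Matrix m n R) :
    (A * B).det = ∑ S : {S : Finset m // S.card = Fintype.card n},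
      (A.submatrix id (subsetEnum S)).det * (B.submatrix (subsetEnum S) id).det := by
  classical
  let F (f : n → m) := (∏ i, B (f i) i) * (A.submatrix id f).det
  have hdet : (A * B).det = ∑ f : {f : n → m // Injective f}, F f := by
    rw [det_mul_eq_sum_prod_mul_det_submatrix]
    refine (Fintype.sum_of_injective Subtype.val Subtype.val_injective _ F (fun f hf => ?_)
      fun _ => rfl).symm
    rw [Subtype.range_coe_subtype, Set.mem_ofPred_eq] at hf
    simp only [F, det_submatrix_eq_zero_of_not_injective A hf, mul_zero]
  rw [hdet, ← Fintype.sum_bijective _ bijective_subsetEnum_comp_perm _ _ fun _ => rfl,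
    Fintype.sum_prod_type]
  exact Fintype.sum_congr _ _ fun S => sum_perm_prod_mul_det_submatrix_comp A B (subsetEnum S)

theorem det_mul_transpose_eq_sum_sq [Fintype m] (A : Matrix n m R) :
    (A * Aᵀ).det = ∑ S : {S : Finset m // S.card = Fintype.card n},
      (A.submatrix id (subsetEnum S)).det ^ 2 := by
  simp only [det_mul_eq_sum_det_mul_det, ← transpose_submatrix, det_transpose, sq]

end CauchyBinet

end Matrix

theorem Fintype.card_subtype_ne_add_one {α : Type*} [Fintype α] [DecidableEq α] (a : α) :
    Fintype.card {x // x ≠ a} + 1 = Fintype.card α := by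
  rw [Fintype.card_subtype_compl, Fintype.card_subtype_eq]
  have := Fintype.card_pos_iff.mpr ⟨a⟩
  omega

section Incidence

open SimpleGraph

variable {V ι : Type*} [DecidableEq V] (head tail : ι → V)

def incidence : Matrix V ι ℤ :=
  of fun x i => if x = head i then 1 else if x = tail i then -1 else 0

def spanningSubgraph (S : Finset ι) : SimpleGraph V :=
  fromEdgeSet ↑(S.image fun i => s(head i, tail i))

def dartVec (a b : V) : ι → ℤ :=
  fun i => if (head i, tail i) = (a, b) then 1 else if (head i, tail i) = (b, a) then -1 else 0

def walkFlow {H : SimpleGraph V} {u v : V} (w : H.Walk u v) : ι → ℤ :=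
  (w.darts.map fun d => dartVec head tail d.fst d.snd).sum

variable {head tail}

theorem spanningSubgraph_adj {S : Finset ι} {a b : V} :
    (spanningSubgraph head tail S).Adj a b ↔
      (∃ i ∈ S, s(head i, tail i) = s(a, b)) ∧ a ≠ b := by
  simp [spanningSubgraph]

theorem incidence_transpose_apply_of_ne {i : ι} (h : head i ≠ tail i) :
    (incidence head tail)ᵀ i = Pi.single (head i) 1 - Pi.single (tail i) 1 := by
  funext x
  by_cases hx : x = head i
  · subst hx; simp [incidence, h]
  · by_cases hx' : x = tail i
    · subst hx'; simp [incidence, hx]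
    · simp [incidence, hx, hx']

theorem vecMul_incidence_apply_of_ne [Fintype V] (f : V → ℤ) {i : ι} (h : head i ≠ tail i) :
    (f ᵥ* incidence head tail) i = f (head i) - f (tail i) := by
  change f ⬝ᵥ (incidence head tail)ᵀ i = _
  rw [incidence_transpose_apply_of_ne h, dotProduct_sub, dotProduct_single, dotProduct_single,
    mul_one, mul_one]

theorem dartVec_eq_single [DecidableEq ι] (hinj : Injective fun i => s(head i, tail i))
    {i : ι} {a b : V} (hi : s(head i, tail i) = s(a, b)) :
    dartVec head tail a b = Pi.single i (dartVec head tail a b i) := by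
  funext j
  by_cases hj : j = i
  · subst hj; simp
  · have hne : s(head j, tail j) ≠ s(a, b) := fun h => hj (hinj (h.trans hi.symm))
    rw [Pi.single_eq_of_ne hj, dartVec, if_neg, if_neg]
    · exact fun h => hne (by simp_all)
    · exact fun h => hne (by simp_all)

theorem incidence_mulVec_dartVec [Fintype ι] [DecidableEq ι]
    (hinj : Injective fun i => s(head i, tail i)) {i : ι} {a b : V}
    (hi : s(head i, tail i) = s(a, b)) (hab : a ≠ b) :
    incidence head tail *ᵥ dartVec head tail a b = Pi.single a 1 - Pi.single b 1 := by
  rw [dartVec_eq_single hinj hi, mulVec_single]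
  funext x
  rcases Sym2.eq_iff.mp hi with ⟨ha, hb⟩ | ⟨ha, hb⟩
  · have hcol := congrFun (incidence_transpose_apply_of_ne (show head i ≠ tail i by
      rwa [ha, hb])) x
    simp_all [dartVec]
  · have hcol := congrFun (incidence_transpose_apply_of_ne (show head i ≠ tail i by
      rw [ha, hb]; exact hab.symm)) x
    simp_all [dartVec]

theorem incidence_mulVec_walkFlow [Fintype ι] [DecidableEq ι]
    (hinj : Injective fun i => s(head i, tail i)) {S : Finset ι} {u v : V}
    (w : (spanningSubgraph head tail S).Walk u v) :
    incidence head tail *ᵥ walkFlow head tail w = Pi.single u 1 - Pi.single v 1 := by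
  induction w with
  | nil => simp [walkFlow]
  | @cons u u' v h p ih =>
    obtain ⟨⟨i, -, hi⟩, hne⟩ := spanningSubgraph_adj.mp h
    have hflow : walkFlow head tail (Walk.cons h p)
        = dartVec head tail u u' + walkFlow head tail p := by
      simp [walkFlow]
    rw [hflow, mulVec_add, incidence_mulVec_dartVec hinj hi hne, ih, sub_add_sub_cancel]

theorem walkFlow_apply_of_notMem [DecidableEq ι] (hinj : Injective fun i => s(head i, tail i))
    {S : Finset ι} {u v : V} (w : (spanningSubgraph head tail S).Walk u v) {i : ι}
    (hi : i ∉ S) :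
    walkFlow head tail w i = 0 := by
  rw [walkFlow, Pi.list_sum_apply, List.map_map]
  refine List.sum_eq_zero fun z hz => ?_
  obtain ⟨d, -, rfl⟩ := List.mem_map.mp hz
  obtain ⟨⟨j, hj, hjd⟩, -⟩ := spanningSubgraph_adj.mp d.adj
  rw [Function.comp_apply, dartVec_eq_single hinj hjd,
    Pi.single_eq_of_ne (ne_of_mem_of_not_mem hj hi).symm]

theorem det_submatrix_incidence_sq_of_connected [Fintype V] [Fintype ι] [DecidableEq ι]
    (hinj : Injective fun i => s(head i, tail i)) {x₀ : V} {g : {v // v ≠ x₀} → ι}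
    (hg : Injective g) (hconn : (spanningSubgraph head tail (univ.image g)).Connected) :
    ((incidence head tail).submatrix Subtype.val g).det ^ 2 = 1 := by
  let w (y : {v // v ≠ x₀}) := (hconn.preconnected y x₀).some
  let P : Matrix {v // v ≠ x₀} {v // v ≠ x₀} ℤ :=
    of fun j y => walkFlow head tail (w y) (g j)
  refine Int.isUnit_sq (isUnit_det_of_right_inverse (B := P) ?_)
  ext x y
  change ((incidence head tail).submatrix Subtype.val g *ᵥ (walkFlow head tail (w y) ∘ g)) x = _
  have hcol := congrFun (submatrix_mulVec_comp (incidence head tail) Subtype.val hg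
    fun i hi => walkFlow_apply_of_notMem hinj (w y) (by simpa using hi)) x
  rw [Function.comp_apply, incidence_mulVec_walkFlow hinj] at hcol
  simpa [one_apply, Pi.single_apply, x.2, Subtype.ext_iff] using hcol

theorem det_submatrix_incidence_eq_zero_of_not_connected [Fintype V] [DecidableEq ι]
    (hloop : ∀ i, head i ≠ tail i) {x₀ : V} {g : {v // v ≠ x₀} → ι}
    (hconn : ¬ (spanningSubgraph head tail (univ.image g)).Connected) :
    ((incidence head tail).submatrix Subtype.val g).det = 0 := by
  classical
  set H := spanningSubgraph head tail (univ.image g)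
  obtain ⟨u, hu⟩ : ∃ u, ¬ H.Reachable u x₀ := by
    by_contra! h
    exact hconn ((connected_iff_exists_forall_reachable H).mpr ⟨x₀, fun v => (h v).symm⟩)
  let f (v : V) : ℤ := if H.Reachable u v then 1 else 0
  rw [← exists_vecMul_eq_zero_iff]
  refine ⟨f ∘ Subtype.val, fun h0 => ?_, ?_⟩
  · have := congrFun h0 ⟨u, fun h => hu (h ▸ Reachable.refl u)⟩
    simp [f] at this
  · rw [comp_vecMul_submatrix _ Subtype.val_injective fun v hv => by simp_all [f]]
    funext j
    have hadj : H.Adj (head (g j)) (tail (g j)) :=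
      spanningSubgraph_adj.mpr ⟨⟨g j, mem_image_of_mem g (mem_univ j), rfl⟩, hloop (g j)⟩
    have hreach : H.Reachable u (head (g j)) ↔ H.Reachable u (tail (g j)) :=
      ⟨fun h => h.trans hadj.reachable, fun h => h.trans hadj.symm.reachable⟩
    simp [vecMul_incidence_apply_of_ne f (hloop (g j)), f, hreach]

theorem card_edgeSet_spanningSubgraph (hinj : Injective fun i => s(head i, tail i))
    (hloop : ∀ i, head i ≠ tail i) (S : Finset ι) :
    Nat.card (spanningSubgraph head tail S).edgeSet = S.card := by
  have hdiag : Disjoint (↑(S.image fun i => s(head i, tail i)) : Set (Sym2 V)) Sym2.diagSet :=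
    Set.disjoint_left.mpr fun e he => by
      obtain ⟨i, -, rfl⟩ := Finset.mem_image.mp he
      exact Sym2.mk_isDiag_iff.not.mpr (hloop i)
  rw [spanningSubgraph, edgeSet_fromEdgeSet, sdiff_eq_left.mpr hdiag, Nat.card_coe_set_eq,
    Set.ncard_coe_finset, card_image_of_injective _ hinj]

theorem isTree_spanningSubgraph_iff [Fintype V] (hinj : Injective fun i => s(head i, tail i))
    (hloop : ∀ i, head i ≠ tail i) (S : Finset ι) :
    (spanningSubgraph head tail S).IsTree ↔
      (spanningSubgraph head tail S).Connected ∧ S.card + 1 = Fintype.card V := by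
  rw [isTree_iff_connected_and_card, card_edgeSet_spanningSubgraph hinj hloop,
    Nat.card_eq_fintype_card]

open scoped Classical in
theorem det_submatrix_incidence_sq [Fintype V] [Fintype ι] [DecidableEq ι]
    (hinj : Injective fun i => s(head i, tail i)) (hloop : ∀ i, head i ≠ tail i) {x₀ : V}
    {g : {v // v ≠ x₀} → ι} (hg : Injective g) :
    ((incidence head tail).submatrix Subtype.val g).det ^ 2
      = if (spanningSubgraph head tail (univ.image g)).IsTree then 1 else 0 := by
  have hcard : (univ.image g).card + 1 = Fintype.card V := by
    rw [card_image_of_injective _ hg, card_univ, Fintype.card_subtype_ne_add_one]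
  rw [isTree_spanningSubgraph_iff hinj hloop, and_iff_left hcard]
  split_ifs with hconn
  · exact det_submatrix_incidence_sq_of_connected hinj hg hconn
  · rw [det_submatrix_incidence_eq_zero_of_not_connected hloop hconn, zero_pow two_ne_zero]

theorem det_submatrix_incidence_mul_transpose_eq_card_isTree
    [Fintype V] [Fintype ι] [DecidableEq ι]
    (hinj : Injective fun i => s(head i, tail i)) (hloop : ∀ i, head i ≠ tail i) (x₀ : V) :
    ((incidence head tail).submatrix (Subtype.val : {v // v ≠ x₀} → V) id *
        ((incidence head tail).submatrix Subtype.val id)ᵀ).det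
      = Nat.card {S : Finset ι // (spanningSubgraph head tail S).IsTree} := by
  classical
  have hcard {S : Finset ι} (hS : (spanningSubgraph head tail S).IsTree) :
      S.card = Fintype.card {v // v ≠ x₀} := by
    have hS' := ((isTree_spanningSubgraph_iff hinj hloop S).mp hS).2
    have hV := Fintype.card_subtype_ne_add_one x₀
    omega
  rw [det_mul_transpose_eq_sum_sq]
  simp_rw [submatrix_submatrix, Function.comp_id, Function.id_comp,
    det_submatrix_incidence_sq hinj hloop (subsetEnum_injective _), image_subsetEnum]
  rw [sum_boole, ← Fintype.card_subtype, ← Nat.card_eq_fintype_card,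
    Nat.card_congr (Equiv.subtypeSubtypeEquivSubtype hcard)]

end Incidence

theorem stmt17_general {V : Type*} [Fintype V] [DecidableEq V]
    (G : SimpleGraph V) [Fintype G.edgeSet]
    (head tail : G.edgeSet → V)
    (hor : ∀ e : G.edgeSet, (e : Sym2 V) = s(head e, tail e))
    (M : Matrix V G.edgeSet ℝ)
    (hM : ∀ x e, M x e = if x = head e then 1 else if x = tail e then -1 else 0)
    (x₀ : V) :
    (Nat.card {A : Finset G.edgeSet //
        (SimpleGraph.fromEdgeSet
          ((A.image (fun e : G.edgeSet => (e : Sym2 V)) : Finset (Sym2 V)) : Set (Sym2 V))).IsTree} : ℝ)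
      = (Matrix.of fun x y : {v : V // v ≠ x₀} =>
          ∑ e : G.edgeSet, M (x : V) e * M (y : V) e).det := by
  have hinj : Injective fun e : G.edgeSet => s(head e, tail e) := fun e e' h =>
    Subtype.ext ((hor e).trans (h.trans (hor e').symm))
  have hloop (e : G.edgeSet) : head e ≠ tail e :=
    G.ne_of_adj ((G.mem_edgeSet).mp (hor e ▸ e.2))
  have hgraph (A : Finset G.edgeSet) :
      spanningSubgraph head tail A = SimpleGraph.fromEdgeSet ↑(A.image Subtype.val) := by
    simp only [spanningSubgraph, ← hor]
  have hM' : M = (incidence head tail).map ((↑) : ℤ → ℝ) := by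
    ext x e
    rw [hM]
    simp only [incidence, map_apply, of_apply]
    split_ifs <;> simp
  let N := (incidence head tail).submatrix (Subtype.val : {v // v ≠ x₀} → V) id
  have hRHS : (Matrix.of fun x y : {v : V // v ≠ x₀} => ∑ e, M x e * M y e)
      = (Int.castRingHom ℝ).mapMatrix (N * Nᵀ) := by
    ext x y
    simp [hM', N, mul_apply]
  rw [hRHS, ← RingHom.map_det, det_submatrix_incidence_mul_transpose_eq_card_isTree hinj hloop]
  simp [hgraph]

/-- Matrix-Tree theorem: for a finite connected graph `G` with arbitrarily oriented
edges, signed incidence matrix `M`, stars `star_x = M x ·`, and a fixed vertex `x₀`,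
the number of spanning trees of `G` equals `det[⟨star_x, star_y⟩]_{x,y ≠ x₀}`. -/
theorem stmt17 {V : Type*} [Fintype V] [DecidableEq V]
    (G : SimpleGraph V) [DecidableRel G.Adj] (hG : G.Connected)
    [Fintype G.edgeSet]
    (head tail : G.edgeSet → V)
    (hor : ∀ e : G.edgeSet, (e : Sym2 V) = s(head e, tail e))
    (M : Matrix V G.edgeSet ℝ)
    (hM : ∀ x e, M x e = if x = head e then 1 else if x = tail e then -1 else 0)
    (x₀ : V) :
    (Nat.card {A : Finset G.edgeSet //
        (SimpleGraph.fromEdgeSet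
          ((A.image (fun e : G.edgeSet => (e : Sym2 V)) : Finset (Sym2 V)) : Set (Sym2 V))).IsTree} : ℝ)
      = (Matrix.of fun x y : {v : V // v ≠ x₀} =>
          ∑ e : G.edgeSet, M (x : V) e * M (y : V) e).det :=
  stmt17_general G head tail hor M hM x₀
end

section
/- Let G be a finite connected graph with oriented edges and incidence matrix M. A set A of |V|−1 edges is a spanning tree of G if and only if the columns of M indexed by A, restricted to rows V ∖ {x₀} for any fixed vertex x₀, form an invertible matrix; moreover, in that case the determinant of this matrix is ±1. -/
/-!
For `f : V → ℝ` vanishing at `x₀`, the row vector `f|_{V ∖ {x₀}}` times the reduced incidence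
matrix is `(f (head e) - f (tail e))_{e ∈ A}`. So the matrix is singular iff some nonzero `f`
vanishing at `x₀` is constant along the edges of `A`, i.e. iff the graph spanned by `A` is
disconnected; with `|V| - 1` edges, being connected is the same as being a tree.

Its columns have at most one `1` and at most one `-1`, and every square matrix of that shape has
determinant `0` or `±1`: expand along a column with at most one nonzero entry, or, if there is
none, every column is `eᵢ - eⱼ` and the rows sum to zero.
-/

namespace Matrix

section TruncatedIncidence

variable {m n R : Type*} [CommRing R]

/-- The shape of the columns of a signed incidence matrix after deleting some rows. -/
def IsTruncatedIncidence (A : Matrix m n R) : Prop :=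
  (∀ i j, A i j ∈ Set.range SignType.cast) ∧
    (∀ j, {i | A i j = 1}.Subsingleton) ∧ ∀ j, {i | A i j = -1}.Subsingleton

namespace IsTruncatedIncidence

variable {A : Matrix m n R}

theorem submatrix {m' n' : Type*} (hA : A.IsTruncatedIncidence) {f : m' → m} (hf : f.Injective)
    (g : n' → n) : (A.submatrix f g).IsTruncatedIncidence :=
  ⟨fun i j => hA.1 (f i) (g j), fun j => (hA.2.1 (g j)).preimage hf,
    fun j => (hA.2.2 (g j)).preimage hf⟩

theorem eq_one_or_eq_neg_one (hA : A.IsTruncatedIncidence) {i : m} {j : n} (h : A i j ≠ 0) :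
    A i j = 1 ∨ A i j = -1 := by
  obtain ⟨s, hs⟩ := hA.1 i j
  cases s <;> simp_all [eq_comm]

theorem sum_col_eq_zero [Fintype m] (hA : A.IsTruncatedIncidence) {j : n} {i₁ i₂ : m}
    (hne : i₁ ≠ i₂) (h₁ : A i₁ j ≠ 0) (h₂ : A i₂ j ≠ 0) : ∑ i, A i j = 0 := by
  have hopp : (A i₁ j = 1 ∧ A i₂ j = -1) ∨ (A i₁ j = -1 ∧ A i₂ j = 1) := by
    rcases hA.eq_one_or_eq_neg_one h₁ with h₁ | h₁ <;>
      rcases hA.eq_one_or_eq_neg_one h₂ with h₂ | h₂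
    · exact absurd (hA.2.1 j h₁ h₂) hne
    · exact Or.inl ⟨h₁, h₂⟩
    · exact Or.inr ⟨h₁, h₂⟩
    · exact absurd (hA.2.2 j h₁ h₂) hne
  have hrest : ∀ i ∈ Finset.univ, i ≠ i₁ ∧ i ≠ i₂ → A i j = 0 := by
    rintro i - ⟨hi₁, hi₂⟩
    by_contra h
    rcases hA.eq_one_or_eq_neg_one h with h | h <;> rcases hopp with ⟨k₁, k₂⟩ | ⟨k₁, k₂⟩
    exacts [hi₁ (hA.2.1 j h k₁), hi₂ (hA.2.1 j h k₂), hi₂ (hA.2.2 j h k₂), hi₁ (hA.2.2 j h k₁)]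
  rw [Finset.sum_eq_add_of_mem i₁ i₂ (Finset.mem_univ _) (Finset.mem_univ _) hne hrest]
  rcases hopp with ⟨k₁, k₂⟩ | ⟨k₁, k₂⟩ <;> simp [k₁, k₂]

theorem det_mem_range_signType_cast {k : ℕ} {B : Matrix (Fin k) (Fin k) R}
    (hB : B.IsTruncatedIncidence) : B.det ∈ Set.range SignType.cast := by
  induction k with
  | zero => exact ⟨1, by simp⟩
  | succ k ih =>
    by_cases hcol : ∃ j i, ∀ i', B i' j ≠ 0 → i' = i
    · obtain ⟨j, i, hi⟩ := hcol
      have hexp : B.det =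
          (-1) ^ (i + j : ℕ) * B i j * (B.submatrix i.succAbove j.succAbove).det := by
        rw [det_succ_column B j, Fintype.sum_eq_single i]
        intro i' hi'
        rw [not_imp_comm.mp (hi i') hi', mul_zero, zero_mul]
      rw [hexp]
      -- `Set.range SignType.cast` is the range of a monoid hom, so it is closed under products.
      change _ ∈ MonoidHom.mrange SignType.castHom.toMonoidHom
      have hneg : (-1 : R) ∈ MonoidHom.mrange SignType.castHom.toMonoidHom := ⟨-1, by simp⟩
      exact mul_mem (mul_mem (pow_mem hneg _) (hB.1 i j))
        (ih (hB.submatrix Fin.succAbove_right_injective _))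
    · push Not at hcol
      have hsum : ∀ j, ∑ i, B i j = 0 := by
        intro j
        obtain ⟨i₁, hi₁, -⟩ := hcol j 0
        obtain ⟨i₂, hi₂, hne⟩ := hcol j i₁
        exact hB.sum_col_eq_zero hne.symm hi₁ hi₂
      refine ⟨0, ?_⟩
      rw [SignType.coe_zero, eq_comm, ← one_smul R B.det, ← det_updateRow_sum B 0 (fun _ => 1)]
      exact det_eq_zero_of_row_eq_zero 0 fun j => by
        simpa [updateRow_self] using (Finset.sum_apply j Finset.univ (fun i => B i)).trans (hsum j)

theorem isTotallyUnimodular (hA : A.IsTruncatedIncidence) : A.IsTotallyUnimodular :=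
  fun _ _ _ hf _ => (hA.submatrix hf _).det_mem_range_signType_cast

end IsTruncatedIncidence

end TruncatedIncidence

section SignedIncidence

variable {V E R : Type*} [DecidableEq V]

def signedIncidence (R : Type*) [Ring R] (head tail : E → V) : Matrix V E R :=
  of fun x e => if x = head e then 1 else if x = tail e then -1 else 0

theorem isTruncatedIncidence_signedIncidence [CommRing R] [NeZero (2 : R)] (head tail : E → V) :
    (signedIncidence R head tail).IsTruncatedIncidence := by
  have h : (1 : R) ≠ -1 := fun h => two_ne_zero (α := R) (by linear_combination h)
  have h₀ : (1 : R) ≠ 0 := fun h => two_ne_zero (α := R) (by linear_combination 2 * h)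
  have hhead : ∀ x e, signedIncidence R head tail x e = 1 → x = head e := by
    intro x e hx
    simp only [signedIncidence, of_apply] at hx
    split_ifs at hx with h₁ h₂
    exacts [h₁, absurd hx.symm h, absurd hx.symm h₀]
  have htail : ∀ x e, signedIncidence R head tail x e = -1 → x = tail e := by
    intro x e hx
    simp only [signedIncidence, of_apply] at hx
    split_ifs at hx with h₁ h₂
    exacts [absurd hx h, h₂, absurd hx.symm (neg_ne_zero.mpr h₀)]
  refine ⟨fun x e => ?_, fun e x hx y hy => (hhead x e hx).trans (hhead y e hy).symm,
    fun e x hx y hy => (htail x e hx).trans (htail y e hy).symm⟩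
  simp only [signedIncidence, of_apply]
  split_ifs
  exacts [⟨1, by simp⟩, ⟨-1, by simp⟩, ⟨0, by simp⟩]

theorem vecMul_signedIncidence [Ring R] [Fintype V] {head tail : E → V}
    (hne : ∀ e, head e ≠ tail e) (f : V → R) :
    f ᵥ* signedIncidence R head tail = fun e => f (head e) - f (tail e) := by
  ext e
  have hsplit : ∀ x, f x * signedIncidence R head tail x e =
      (if x = head e then f x else 0) - (if x = tail e then f x else 0) := by
    intro x
    have hne' := hne e
    simp only [signedIncidence, of_apply]
    split_ifs <;> grind
  simp only [vecMul, dotProduct, hsplit, Finset.sum_sub_distrib, Finset.sum_ite_eq',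
    Finset.mem_univ, if_true]

theorem comp_val_vecMul_submatrix_val [NonUnitalNonAssocSemiring R] [Fintype V]
    (P : Matrix V E R) {x₀ : V} {ι : Type*} (g : ι → E) {f : V → R} (hf : f x₀ = 0) :
    (f ∘ Subtype.val) ᵥ* P.submatrix (Subtype.val : {x // x ≠ x₀} → V) g = (f ᵥ* P) ∘ g := by
  ext y
  simp only [vecMul, dotProduct, Function.comp_apply, submatrix_apply]
  rw [Fintype.sum_eq_add_sum_subtype_ne _ x₀, hf, zero_mul, zero_add]

theorem det_submatrix_val_ne_zero_iff [CommRing R] [IsDomain R] [Fintype V] (P : Matrix V E R)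
    (x₀ : V) (g : {x // x ≠ x₀} → E) :
    (P.submatrix Subtype.val g).det ≠ 0 ↔ ∀ f : V → R, f x₀ = 0 → (f ᵥ* P) ∘ g = 0 → f = 0 := by
  rw [Ne, ← exists_vecMul_eq_zero_iff]
  push Not
  constructor
  · intro h f hf₀ hf
    have hval : (f ∘ Subtype.val : {x // x ≠ x₀} → R) = 0 := by
      by_contra hne
      exact h _ hne (by rw [comp_val_vecMul_submatrix_val P g hf₀, hf])
    funext x
    by_cases hx : x = x₀
    · rw [hx, hf₀, Pi.zero_apply]
    · exact congrFun hval ⟨x, hx⟩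
  · intro h v hv hker
    let f : V → R := Function.extend Subtype.val v 0
    have hfv : f ∘ Subtype.val = v := funext fun x => Subtype.val_injective.extend_apply v 0 x
    have hf₀ : f x₀ = 0 := Function.extend_apply' _ _ _ fun ⟨y, hy⟩ => y.2 hy
    refine hv ?_
    rw [← hfv, h f hf₀ (by rw [← comp_val_vecMul_submatrix_val P g hf₀, hfv, hker])]
    rfl

end SignedIncidence

end Matrix

namespace SimpleGraph

variable {V β : Type*} {H : SimpleGraph V}

theorem Reachable.eq_of_forall_adj_eq {f : V → β} (hf : ∀ a b, H.Adj a b → f a = f b) {a b : V}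
    (h : H.Reachable a b) : f a = f b := by
  obtain ⟨p⟩ := h
  induction p with
  | nil => rfl
  | cons hadj _ ih => exact (hf _ _ hadj).trans ih

theorem connected_iff_forall_eq_zero [Zero β] [Nontrivial β] (x₀ : V) :
    H.Connected ↔ ∀ f : V → β, f x₀ = 0 → (∀ a b, H.Adj a b → f a = f b) → f = 0 := by
  classical
  refine ⟨fun h f hf₀ hf => funext fun x => ((h x x₀).eq_of_forall_adj_eq hf).trans hf₀,
    fun h => ?_⟩
  obtain ⟨b, hb⟩ := exists_ne (0 : β)
  have hreach : ∀ x, H.Reachable x₀ x := by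
    intro x
    by_contra hx
    refine hb ?_
    have hf : ∀ a c, H.Adj a c →
        (if H.Reachable x₀ a then 0 else b) = if H.Reachable x₀ c then 0 else b := fun a c hac => by
      rw [if_congr ⟨fun h => h.trans hac.reachable, fun h => h.trans hac.symm.reachable⟩ rfl rfl]
    simpa [hx] using congrFun (h _ (by simp) hf) x
  have : Nonempty V := ⟨x₀⟩
  exact ⟨fun u v => (hreach u).symm.trans (hreach v)⟩

theorem forall_adj_fromEdgeSet_image_iff {E : Type*} (head tail : E → V) (A : Set E) (f : V → β) :
    (∀ a b, (fromEdgeSet ((fun e => s(head e, tail e)) '' A)).Adj a b → f a = f b) ↔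
      ∀ e ∈ A, f (head e) = f (tail e) := by
  refine ⟨fun h e he => ?_, ?_⟩
  · by_cases hht : head e = tail e
    · rw [hht]
    · exact h _ _ ⟨⟨e, he, rfl⟩, hht⟩
  · rintro h a b ⟨⟨e, he, hab⟩, -⟩
    rcases Sym2.eq_iff.mp hab with ⟨rfl, rfl⟩ | ⟨rfl, rfl⟩
    exacts [h e he, (h e he).symm]

theorem isTree_fromEdgeSet_iff_connected [Fintype V] {s : Finset (Sym2 V)}
    (hs : ∀ z ∈ s, ¬z.IsDiag) (hcard : s.card + 1 = Fintype.card V) :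
    (fromEdgeSet (s : Set (Sym2 V))).IsTree ↔ (fromEdgeSet (s : Set (Sym2 V))).Connected := by
  have hdiag : (s : Set (Sym2 V)) \ Sym2.diagSet = s :=
    sdiff_eq_left.mpr (Set.disjoint_left.mpr fun z hzs hz => hs z hzs hz)
  rw [isTree_iff_connected_and_card, edgeSet_fromEdgeSet, hdiag, Nat.card_coe_set_eq,
    Set.ncard_coe_finset, hcard, Nat.card_eq_fintype_card, and_iff_left rfl]

theorem connected_fromEdgeSet_iff_det_submatrix_ne_zero {E R : Type*} [Fintype V]
    [DecidableEq V] [CommRing R] [IsDomain R] {head tail : E → V} (hne : ∀ e, head e ≠ tail e)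
    (x₀ : V) (g : {x // x ≠ x₀} → E) :
    (fromEdgeSet ((fun e => s(head e, tail e)) '' Set.range g)).Connected ↔
      ((Matrix.signedIncidence R head tail).submatrix Subtype.val g).det ≠ 0 := by
  rw [connected_iff_forall_eq_zero x₀ (β := R), Matrix.det_submatrix_val_ne_zero_iff]
  simp_rw [Matrix.vecMul_signedIncidence hne, forall_adj_fromEdgeSet_image_iff,
    Set.forall_mem_range, funext_iff, Function.comp_apply, Pi.zero_apply, sub_eq_zero]

end SimpleGraph

theorem stmt18_general {V : Type*} [Fintype V] [DecidableEq V]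
    (G : SimpleGraph V)
    (head tail : G.edgeSet → V)
    (hor : ∀ e : G.edgeSet, (e : Sym2 V) = s(head e, tail e))
    (M : Matrix V G.edgeSet ℝ)
    (hM : ∀ x e, M x e = if x = head e then 1 else if x = tail e then -1 else 0)
    (x₀ : V) (A : Finset G.edgeSet) (hA : A.card = Fintype.card V - 1)
    (σ : {v : V // v ≠ x₀} ≃ ↑A) :
    ((SimpleGraph.fromEdgeSet
        ((A.image (fun e : G.edgeSet => (e : Sym2 V)) : Finset (Sym2 V)) : Set (Sym2 V))).IsTree
      ↔ IsUnit (Matrix.of fun x y : {v : V // v ≠ x₀} => M (x : V) ((σ y : G.edgeSet)))) ∧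
    ((SimpleGraph.fromEdgeSet
        ((A.image (fun e : G.edgeSet => (e : Sym2 V)) : Finset (Sym2 V)) : Set (Sym2 V))).IsTree →
      (Matrix.of fun x y : {v : V // v ≠ x₀} => M (x : V) ((σ y : G.edgeSet))).det = 1 ∨
      (Matrix.of fun x y : {v : V // v ≠ x₀} => M (x : V) ((σ y : G.edgeSet))).det = -1) := by
  obtain rfl : M = Matrix.signedIncidence ℝ head tail := Matrix.ext hM
  set g : {v : V // v ≠ x₀} → G.edgeSet := fun y => σ y
  have hrange : Set.range g = A := by
    ext e
    exact ⟨by rintro ⟨y, rfl⟩; exact (σ y).2, fun he => ⟨σ.symm ⟨e, he⟩, by simp [g]⟩⟩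
  have hedges : ((A.image fun e : G.edgeSet => (e : Sym2 V)) : Set (Sym2 V)) =
      (fun e => s(head e, tail e)) '' Set.range g := by
    rw [hrange, Finset.coe_image, funext hor]
  have hcard : (A.image fun e : G.edgeSet => (e : Sym2 V)).card + 1 = Fintype.card V := by
    rw [Finset.card_image_of_injective _ Subtype.coe_injective, hA,
      Nat.sub_add_cancel (Fintype.card_pos_iff.mpr ⟨x₀⟩)]
  have htree := SimpleGraph.isTree_fromEdgeSet_iff_connected
    (by simp only [Finset.mem_image]; rintro _ ⟨e, -, rfl⟩; exact G.not_isDiag_of_mem_edgeSet e.2)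
    hcard
  have hne : ∀ e : G.edgeSet, head e ≠ tail e := fun e => G.ne_of_adj (by simpa [hor] using e.2)
  have hconn := SimpleGraph.connected_fromEdgeSet_iff_det_submatrix_ne_zero (R := ℝ) hne x₀ g
  have hTU := (Matrix.isTruncatedIncidence_signedIncidence (R := ℝ) head tail).isTotallyUnimodular
  obtain ⟨s, hs⟩ := (Matrix.isTotallyUnimodular_iff_fintype _).mp hTU _ Subtype.val g
  change (_ ↔ IsUnit ((Matrix.signedIncidence ℝ head tail).submatrix Subtype.val g)) ∧
    (_ → ((Matrix.signedIncidence ℝ head tail).submatrix Subtype.val g).det = 1 ∨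
      ((Matrix.signedIncidence ℝ head tail).submatrix Subtype.val g).det = -1)
  rw [Matrix.isUnit_iff_isUnit_det, isUnit_iff_ne_zero, htree, hedges, hconn, ← hs]
  refine ⟨Iff.rfl, fun h => ?_⟩
  cases s <;> simp at h ⊢

/-- A set `A` of `|V|−1` edges of a finite connected graph `G` is a spanning tree iff
the square submatrix of the signed incidence matrix `M` with rows `V ∖ {x₀}` and
columns `A` is invertible; and in that case its determinant is `±1`. -/
theorem stmt18 {V : Type*} [Fintype V] [DecidableEq V]
    (G : SimpleGraph V) [DecidableRel G.Adj] (hG : G.Connected)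
    [Fintype G.edgeSet]
    (head tail : G.edgeSet → V)
    (hor : ∀ e : G.edgeSet, (e : Sym2 V) = s(head e, tail e))
    (M : Matrix V G.edgeSet ℝ)
    (hM : ∀ x e, M x e = if x = head e then 1 else if x = tail e then -1 else 0)
    (x₀ : V) (A : Finset G.edgeSet) (hA : A.card = Fintype.card V - 1)
    (σ : {v : V // v ≠ x₀} ≃ ↑A) :
    ((SimpleGraph.fromEdgeSet
        ((A.image (fun e : G.edgeSet => (e : Sym2 V)) : Finset (Sym2 V)) : Set (Sym2 V))).IsTree
      ↔ IsUnit (Matrix.of fun x y : {v : V // v ≠ x₀} => M (x : V) ((σ y : G.edgeSet)))) ∧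
    ((SimpleGraph.fromEdgeSet
        ((A.image (fun e : G.edgeSet => (e : Sym2 V)) : Finset (Sym2 V)) : Set (Sym2 V))).IsTree →
      (Matrix.of fun x y : {v : V // v ≠ x₀} => M (x : V) ((σ y : G.edgeSet))).det = 1 ∨
      (Matrix.of fun x y : {v : V // v ≠ x₀} => M (x : V) ((σ y : G.edgeSet))).det = -1) :=
  stmt18_general G head tail hor M hM x₀ A hA σ
end
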